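/- arXiv:2406.05781 — 7 statements merged into one kernel-verified Lean document; each statement's English description precedes it below -/
import Mathlib

section
/- Every simplicial semigroup is isomorphic as an additive monoid to an orthogonal semigroup. Precisely: if (H,E) is a simplicial semigroup of rank d, then there exist an integer m ≥ 1 and an orthogonal semigroup H' ⊆ ℕ^d of order m together with an additive monoid isomorphism H ≅ H'. -/
open scoped Classical

namespace AGpaper

/-- An orthogonal semigroup of order `m` in `ℕ^d`: a finitely generated submonoid of `ℕ^d`
containing all `m eᵢ`, with `n·h ∈ ℕ(m e₁)+⋯+ℕ(m e_d)` for all `h ∈ H` for some `n > 0`,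
and `m'·eᵢ ∉ H` for `0 < m' < m`. -/
def IsOrthogonal (d m : ℕ) (H : AddSubmonoid (Fin d → ℤ)) : Prop :=
  H.FG ∧
  (∀ x ∈ H, ∀ i, 0 ≤ x i) ∧
  (∀ i : Fin d, Pi.single i (m : ℤ) ∈ H) ∧
  (∃ n : ℕ, 0 < n ∧ ∀ x ∈ H, ∀ i, (m : ℤ) ∣ (n : ℤ) * x i) ∧
  (∀ i : Fin d, ∀ m' : ℕ, 0 < m' → m' < m → Pi.single i (m' : ℤ) ∉ H)

/-- `(H, E)` is a simplicial semigroup of rank `d` with extreme rays `b : Fin d → ℤ^N`: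
`H` is finitely generated, the `b i ∈ H` are `ℚ`-linearly independent, and some positive
multiple of every element of `H` lies in `ℕb₁ + ⋯ + ℕb_d`. -/
def IsSimplicial (N d : ℕ) (H : AddSubmonoid (Fin N → ℤ)) (b : Fin d → (Fin N → ℤ)) : Prop :=
  H.FG ∧ (∀ i, b i ∈ H) ∧
  LinearIndependent ℚ (fun i : Fin d => (fun j : Fin N => ((b i j : ℚ)))) ∧
  (∃ n : ℕ, 0 < n ∧ ∀ x ∈ H, ∃ c : Fin d → ℕ, (n : ℤ) • x = ∑ i, (c i : ℤ) • b i)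

/-- Every simplicial semigroup of rank `d` is isomorphic, as an additive
monoid, to an orthogonal semigroup `H' ⊆ ℕ^d` of some order `m ≥ 1`. -/
theorem simplicial_iso_orthogonal {N d : ℕ} (H : AddSubmonoid (Fin N → ℤ))
    (b : Fin d → (Fin N → ℤ)) (hH : IsSimplicial N d H b) :
    ∃ m : ℕ, 1 ≤ m ∧ ∃ H' : AddSubmonoid (Fin d → ℤ),
      IsOrthogonal d m H' ∧ Nonempty (H ≃+ H') := by
  obtain ⟨hFG, hbH, hli, n, hn, hrep⟩ := hH
  -- uniqueness of integer coefficients in the rays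
  have uniq : ∀ c c' : Fin d → ℤ, (∑ i, c i • b i = ∑ i, c' i • b i) → c = c' := by
    intro c c' hcc
    have hq : ∀ i, ((c i : ℚ) - (c' i : ℚ)) = 0 := by
      rw [Fintype.linearIndependent_iff] at hli
      refine hli (fun i => (c i : ℚ) - (c' i : ℚ)) ?_
      funext j
      have hj : (∑ i, c i • b i) j = (∑ i, c' i • b i) j := by rw [hcc]
      simp only [Finset.sum_apply, Pi.smul_apply, smul_eq_mul] at hj
      have hjq : (∑ i, (c i : ℚ) * (b i j : ℚ)) = ∑ i, (c' i : ℚ) * (b i j : ℚ) := by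
        exact_mod_cast congrArg (fun z : ℤ => (z : ℚ)) (by push_cast; exact_mod_cast hj)
      simp only [Finset.sum_apply, Pi.smul_apply, smul_eq_mul, sub_mul, Finset.sum_sub_distrib,
        Pi.zero_apply]
      rw [hjq]; ring
    funext i
    have := hq i
    have : (c i : ℚ) = (c' i : ℚ) := by linarith
    exact_mod_cast this
  -- the coefficient function
  have hrep' : ∀ h : H, ∃ c : Fin d → ℕ, (n : ℤ) • (h : Fin N → ℤ) = ∑ i, (c i : ℤ) • b i :=
    fun h => hrep h.1 h.2
  set cf : H → Fin d → ℕ := fun h => (hrep' h).choose with hcf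
  have hcfs : ∀ h : H, (n : ℤ) • (h : Fin N → ℤ) = ∑ i, (cf h i : ℤ) • b i :=
    fun h => (hrep' h).choose_spec
  -- ψ : H →+ ℤ^d
  have hψadd : ∀ h h' : H, (fun i => (cf (h + h') i : ℤ)) =
      (fun i => (cf h i : ℤ)) + fun i => (cf h' i : ℤ) := by
    intro h h'
    refine uniq _ _ ?_
    rw [← hcfs (h + h')]
    have : ∑ i, ((fun i => (cf h i : ℤ)) + fun i => (cf h' i : ℤ)) i • b i =
        (∑ i, (cf h i : ℤ) • b i) + ∑ i, (cf h' i : ℤ) • b i := by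
      rw [← Finset.sum_add_distrib]
      refine Finset.sum_congr rfl fun i _ => ?_
      simp [add_smul]
    rw [this, ← hcfs h, ← hcfs h']
    push_cast
    simp [smul_add]
  have hψzero : (fun i => (cf (0 : H) i : ℤ)) = 0 := by
    refine uniq _ _ ?_
    rw [← hcfs 0]
    simp
  set ψ : H →+ (Fin d → ℤ) :=
    { toFun := fun h i => (cf h i : ℤ)
      map_zero' := hψzero
      map_add' := hψadd } with hψdef
  have hψapp : ∀ (h : H) (i : Fin d), ψ h i = (cf h i : ℤ) := fun _ _ => rfl
  have hψinj : Function.Injective ψ := by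
    intro h h' hhh
    have h1 : (n : ℤ) • (h : Fin N → ℤ) = (n : ℤ) • (h' : Fin N → ℤ) := by
      rw [hcfs h, hcfs h']
      refine Finset.sum_congr rfl fun i _ => ?_
      have : (cf h i : ℤ) = cf h' i := congrFun hhh i
      rw [this]
    have hn0 : (n : ℤ) ≠ 0 := by exact_mod_cast hn.ne'
    exact Subtype.ext (smul_right_injective _ hn0 h1)
  -- ψ of the rays
  have hψb : ∀ i : Fin d, ψ ⟨b i, hbH i⟩ = Pi.single i (n : ℤ) := by
    intro i
    have key : ∑ j, ((cf (⟨b i, hbH i⟩ : H) j : ℤ)) • b j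
        = ∑ j, (Pi.single i (n : ℤ) : Fin d → ℤ) j • b j := by
      rw [← hcfs (⟨b i, hbH i⟩ : H)]
      simp [Pi.single_apply, ite_smul]
    exact uniq _ _ key
  -- minimal positive multiples on each axis
  have exI : ∀ i : Fin d, ∃ t : ℕ, 0 < t ∧ ∃ h : H, ψ h = Pi.single i (t : ℤ) :=
    fun i => ⟨n, hn, ⟨b i, hbH i⟩, hψb i⟩
  set mi : Fin d → ℕ := fun i => Nat.find (exI i) with hmi
  have hmis : ∀ i, 0 < mi i ∧ ∃ h : H, ψ h = Pi.single i (mi i : ℤ) :=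
    fun i => Nat.find_spec (exI i)
  have hmimin : ∀ i, ∀ t : ℕ, 0 < t → (∃ h : H, ψ h = Pi.single i (t : ℤ)) → mi i ≤ t :=
    fun i t ht hth => Nat.find_le ⟨ht, hth⟩
  set m : ℕ := ∏ i, mi i with hm
  have hmpos : 0 < m := Finset.prod_pos fun i _ => (hmis i).1
  have hmidvd : ∀ i, mi i ∣ m := fun i => Finset.dvd_prod_of_mem mi (Finset.mem_univ i)
  set cc : Fin d → ℕ := fun i => m / mi i with hcc
  have hccmi : ∀ i, cc i * mi i = m := fun i => Nat.div_mul_cancel (hmidvd i)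
  have hccpos : ∀ i, 0 < cc i := by
    intro i
    rcases Nat.eq_zero_or_pos (cc i) with h | h
    · have := hccmi i; rw [h, zero_mul] at this; omega
    · exact h
  -- the rescaling map
  set σ : (Fin d → ℤ) →+ (Fin d → ℤ) :=
    { toFun := fun x i => (cc i : ℤ) * x i
      map_zero' := by funext i; simp
      map_add' := by intro x y; funext i; simp [mul_add] } with hσdef
  have hσapp : ∀ x i, σ x i = (cc i : ℤ) * x i := fun x i => rfl
  have hσinj : Function.Injective σ := by
    intro x y hxy
    funext i
    have h1 : (cc i : ℤ) * x i = (cc i : ℤ) * y i := congrFun hxy i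
    have h0 : (cc i : ℤ) ≠ 0 := by exact_mod_cast (hccpos i).ne'
    exact mul_left_cancel₀ h0 h1
  set g : H →+ (Fin d → ℤ) := σ.comp ψ with hgdef
  have hgapp : ∀ (h : H) (i : Fin d), g h i = (cc i : ℤ) * ψ h i := fun h i => rfl
  have hginj : Function.Injective g := fun a a' h => hψinj (hσinj h)
  refine ⟨m, hmpos, (AddMonoidHom.mrange g), ⟨?_, ?_, ?_, ?_, ?_⟩, ?_⟩
  · -- finitely generated
    have h1 : AddMonoid.FG H := (AddMonoid.fg_iff_addSubmonoid_fg H).mpr hFG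
    have h2 : (⊤ : AddSubmonoid H).FG := AddMonoid.fg_def.mp h1
    rw [AddMonoidHom.mrange_eq_map]
    exact h2.map g
  · -- nonnegative coordinates
    rintro x ⟨h, rfl⟩ i
    rw [hgapp, hψapp]
    positivity
  · -- m·eᵢ belongs
    intro i
    obtain ⟨h, hψh⟩ := (hmis i).2
    refine ⟨h, ?_⟩
    funext j
    rw [hgapp, congrFun hψh j]
    rcases eq_or_ne j i with rfl | hji
    · simp only [Pi.single_eq_same]
      rw [← hccmi j]
      push_cast
      ring
    · simp [Pi.single_eq_of_ne hji]
  · -- divisibility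
    exact ⟨m, hmpos, fun x _ i => dvd_mul_right _ _⟩
  · -- minimality
    rintro i m' hm'0 hm'm ⟨h, hg⟩
    have hco : ∀ j, (cc j : ℤ) * (cf h j : ℤ) = (Pi.single i ((m' : ℕ) : ℤ) : Fin d → ℤ) j := by
      intro j
      rw [← hψapp, ← hgapp]
      exact congrFun hg j
    have hchi : (cc i : ℤ) * (cf h i : ℤ) = (m' : ℤ) := by
      have := hco i; rwa [Pi.single_eq_same] at this
    have hchiN : cc i * cf h i = m' := by exact_mod_cast hchi
    have hψh : ψ h = Pi.single i ((cf h i : ℕ) : ℤ) := by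
      funext j
      rw [hψapp]
      rcases eq_or_ne j i with rfl | hji
      · rw [Pi.single_eq_same]
      · have hz := hco j
        rw [Pi.single_eq_of_ne hji] at hz
        have h0 : (cc j : ℤ) ≠ 0 := by exact_mod_cast (hccpos j).ne'
        have hz2 : (cf h j : ℤ) = 0 := by
          rcases mul_eq_zero.mp hz with h' | h'
          · exact absurd h' h0
          · exact h'
        rw [hz2, Pi.single_eq_of_ne hji]
    have hcfpos : 0 < cf h i := by
      rcases Nat.eq_zero_or_pos (cf h i) with h0 | h0
      · rw [h0, Nat.mul_zero] at hchiN; omega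
      · exact h0
    have hle : mi i ≤ cf h i := hmimin i (cf h i) hcfpos ⟨h, hψh⟩
    have : m ≤ m' := by
      calc m = cc i * mi i := (hccmi i).symm
        _ ≤ cc i * cf h i := Nat.mul_le_mul_left _ hle
        _ = m' := hchiN
    omega
  · -- the isomorphism
    refine ⟨AddEquiv.ofBijective (AddMonoidHom.mrangeRestrict g) ⟨?_, AddMonoidHom.mrangeRestrict_surjective g⟩⟩
    intro a a' haa
    exact hginj (congrArg Subtype.val haa)

end AGpaper
end

section
/- Let (H,E) be an orthogonal semigroup of order m in ℕ^d. The following are equivalent: (1) H is normal; (2) Ap(H,E) = {h ∈ H : σ_i(h) < m for every 1 ≤ i ≤ d}; (3) for every h ∈ Ap(H,E) and every v ∈ Ap(H,E) with h + v ∈ ℤE, one has h + v = Σ_{i ∈ supp h} m·e_i, where supp h = {i : σ_i(h) ≠ 0}. -/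
open scoped Classical

namespace AGpaper

/-- Membership in `ℤE = ℤ(m e₁) + ⋯ + ℤ(m e_d)`. -/
def inZE (d m : ℕ) (x : Fin d → ℤ) : Prop := ∀ i : Fin d, (m : ℤ) ∣ x i

/-- The Apéry set of an orthogonal semigroup w.r.t. its extreme rays `m eᵢ`. -/
def apery (d m : ℕ) (H : AddSubmonoid (Fin d → ℤ)) : Set (Fin d → ℤ) :=
  {x | x ∈ H ∧ ∀ i : Fin d, x - Pi.single i (m : ℤ) ∉ H}

/-- Normality: every element of `G(H)` with a positive multiple in `H` lies in `H`. -/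
def IsNormalSg (d : ℕ) (H : AddSubmonoid (Fin d → ℤ)) : Prop :=
  ∀ g ∈ AddSubgroup.closure (H : Set (Fin d → ℤ)),
    (∃ n : ℕ, 1 ≤ n ∧ n • g ∈ H) → g ∈ H

section aux
variable {d m : ℕ} {H : AddSubmonoid (Fin d → ℤ)}

/-- `m ℕ^d ⊆ H`. -/
lemma mul_mem_H (horth : IsOrthogonal d m H) (c : Fin d → ℕ) :
    (fun i => (m : ℤ) * c i) ∈ H := by
  have : (fun i => (m : ℤ) * c i) = ∑ j : Fin d, c j • Pi.single j (m : ℤ) := by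
    funext i
    simp [Pi.single_apply, Finset.sum_ite_eq, mul_comm]
  rw [this]
  exact AddSubmonoid.sum_mem _ fun j _ => AddSubmonoid.nsmul_mem _ (horth.2.2.1 j) _

/-- Apéry decomposition: every `h ∈ H` is `w + m c` with `w` in the Apéry set. -/
lemma apery_decomp (horth : IsOrthogonal d m H) (hm : 1 ≤ m) :
    ∀ h ∈ H, ∃ w ∈ apery d m H, ∃ c : Fin d → ℕ,
      h = w + fun i => (m : ℤ) * c i := by
  suffices key : ∀ N : ℕ, ∀ h ∈ H, (∑ i, h i).toNat ≤ N →
      ∃ w ∈ apery d m H, ∃ c : Fin d → ℕ, h = w + fun i => (m : ℤ) * c i by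
    intro h hh
    exact key (∑ i, h i).toNat h hh le_rfl
  intro N
  induction N with
  | zero =>
    intro h hh hN
    by_cases hap : ∀ i : Fin d, h - Pi.single i (m : ℤ) ∉ H
    · exact ⟨h, ⟨hh, hap⟩, 0, by funext i; simp⟩
    · push_neg at hap
      obtain ⟨j, hj⟩ := hap
      set h' : Fin d → ℤ := h - Pi.single j (m : ℤ) with hh'
      have hsum : ∑ i, h' i = (∑ i, h i) - m := by
        simp [hh', Pi.sub_apply, Finset.sum_sub_distrib, Pi.single_apply,
          Finset.sum_ite_eq]
      have h1 : 0 ≤ ∑ i, h' i :=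
        Finset.sum_nonneg fun i _ => horth.2.1 _ hj i
      have h2 : 0 ≤ ∑ i, h i := Finset.sum_nonneg fun i _ => horth.2.1 _ hh i
      have hm' : (1 : ℤ) ≤ m := by exact_mod_cast hm
      omega
  | succ N ih =>
    intro h hh hN
    by_cases hap : ∀ i : Fin d, h - Pi.single i (m : ℤ) ∉ H
    · exact ⟨h, ⟨hh, hap⟩, 0, by funext i; simp⟩
    · push_neg at hap
      obtain ⟨j, hj⟩ := hap
      set h' : Fin d → ℤ := h - Pi.single j (m : ℤ) with hh'
      have hsum : ∑ i, h' i = (∑ i, h i) - m := by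
        simp [hh', Pi.sub_apply, Finset.sum_sub_distrib, Pi.single_apply,
          Finset.sum_ite_eq]
      have h1 : 0 ≤ ∑ i, h' i :=
        Finset.sum_nonneg fun i _ => horth.2.1 _ hj i
      have hm' : (1 : ℤ) ≤ m := by exact_mod_cast hm
      have hle : (∑ i, h' i).toNat ≤ N := by omega
      obtain ⟨w, hw, c, hc⟩ := ih _ hj hle
      refine ⟨w, hw, fun i => c i + if i = j then 1 else 0, ?_⟩
      funext i
      have hthis := congrFun hc i
      simp only [hh', Pi.sub_apply, Pi.add_apply, Pi.single_apply] at hthis ⊢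
      by_cases hij : i = j
      · simp only [hij, if_true] at hthis ⊢
        push_cast
        linarith
      · simp only [hij, if_false] at hthis ⊢
        push_cast
        linarith

/-- `0` is in the Apéry set, and complements: every `w ∈ H` has `v ∈ Ap` with `w + v ∈ ℤE`. -/
lemma apery_complement (horth : IsOrthogonal d m H) (hm : 1 ≤ m) :
    ∀ w ∈ H, ∃ v ∈ apery d m H, ∀ i, (m : ℤ) ∣ w i + v i := by
  intro w hw
  obtain ⟨n, hn, hdvd⟩ := horth.2.2.2.1
  have hmem : (n - 1) • w ∈ H := AddSubmonoid.nsmul_mem _ hw _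
  obtain ⟨v, hv, c, hc⟩ := apery_decomp horth hm _ hmem
  refine ⟨v, hv, fun i => ?_⟩
  have h1 : (m : ℤ) ∣ (n : ℤ) * w i := hdvd w hw i
  have h2 : ((n - 1 : ℕ) : ℤ) * w i = v i + (m : ℤ) * c i := by
    have := congrFun hc i
    simpa [Pi.add_apply, nsmul_eq_mul] using this
  have hn1 : ((n - 1 : ℕ) : ℤ) = (n : ℤ) - 1 := by
    have h1n : 1 ≤ n := hn
    push_cast [h1n]; ring
  rw [hn1] at h2
  have : w i + v i = (n : ℤ) * w i - (m : ℤ) * c i := by linear_combination -h2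
  rw [this]
  exact dvd_sub h1 ⟨c i, rfl⟩

/-- Elements of the group generated by `H` are differences. -/
lemma closure_eq_diff (g : Fin d → ℤ)
    (hg : g ∈ AddSubgroup.closure (H : Set (Fin d → ℤ))) :
    ∃ a ∈ H, ∃ b ∈ H, g = a - b := by
  let S : AddSubgroup (Fin d → ℤ) :=
    { carrier := {x | ∃ a ∈ H, ∃ b ∈ H, x = a - b}
      zero_mem' := ⟨0, H.zero_mem, 0, H.zero_mem, by simp⟩
      add_mem' := by
        rintro x y ⟨a, ha, b, hb, rfl⟩ ⟨a', ha', b', hb', rfl⟩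
        exact ⟨a + a', H.add_mem ha ha', b + b', H.add_mem hb hb', by abel⟩
      neg_mem' := by
        rintro x ⟨a, ha, b, hb, rfl⟩
        exact ⟨b, hb, a, ha, by abel⟩ }
  have : AddSubgroup.closure (H : Set (Fin d → ℤ)) ≤ S :=
    AddSubgroup.closure_le S |>.2 fun x hx => ⟨x, hx, 0, H.zero_mem, by simp⟩
  exact this hg

/-- Nonnegative part of the apery set membership (⊇ of (2)). -/
lemma subset_apery (horth : IsOrthogonal d m H) :
    {x | x ∈ H ∧ ∀ i : Fin d, x i < (m : ℤ)} ⊆ apery d m H := by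
  rintro x ⟨hx, hlt⟩
  refine ⟨hx, fun i hmem => ?_⟩
  have := horth.2.1 _ hmem i
  simp only [Pi.sub_apply, Pi.single_eq_same] at this
  linarith [hlt i]

end aux

/-- For an orthogonal semigroup `(H,E)` of order `m`, the following are
equivalent: (1) `H` is normal; (2) `Ap(H,E) = {h ∈ H : σᵢ(h) < m for all i}`;
(3) for every `h, v ∈ Ap(H,E)` with `h + v ∈ ℤE`, `h + v = Σ_{i ∈ supp h} m eᵢ`. -/
theorem normal_iff_apery {d m : ℕ} (hd : 1 ≤ d) (hm : 1 ≤ m)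
    (H : AddSubmonoid (Fin d → ℤ)) (horth : IsOrthogonal d m H) :
    (IsNormalSg d H ↔ apery d m H = {x | x ∈ H ∧ ∀ i : Fin d, x i < (m : ℤ)}) ∧
    (IsNormalSg d H ↔
      ∀ h ∈ apery d m H, ∀ v ∈ apery d m H, inZE d m (h + v) →
        h + v = fun i : Fin d => if h i = 0 then 0 else (m : ℤ)) := by

  have hm' : (1 : ℤ) ≤ m := by exact_mod_cast hm
  -- (1) → (2)
  have p12 : IsNormalSg d H →
      apery d m H = {x | x ∈ H ∧ ∀ i : Fin d, x i < (m : ℤ)} := by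
    intro hnorm
    refine Set.Subset.antisymm ?_ (subset_apery horth)
    rintro h ⟨hh, hap⟩
    refine ⟨hh, fun j => ?_⟩
    by_contra hlt
    push_neg at hlt
    set g : Fin d → ℤ := h - Pi.single j (m : ℤ) with hgdef
    have hgpos : ∀ i, 0 ≤ g i := by
      intro i
      simp only [hgdef, Pi.sub_apply, Pi.single_apply]
      by_cases hij : i = j <;> simp [hij]
      · subst hij; linarith
      · exact horth.2.1 _ hh i
    have hgcl : g ∈ AddSubgroup.closure (H : Set (Fin d → ℤ)) :=
      sub_mem (AddSubgroup.subset_closure hh)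
        (AddSubgroup.subset_closure (horth.2.2.1 j))
    have hns : m • g ∈ H := by
      have : m • g = fun i => (m : ℤ) * ((g i).toNat : ℕ) := by
        funext i
        simp only [Pi.smul_apply, nsmul_eq_mul]
        rw [Int.toNat_of_nonneg (hgpos i)]
      rw [this]
      exact mul_mem_H horth _
    exact hap j (hnorm g hgcl ⟨m, hm, hns⟩)
  -- (2) → (3)
  have p23 : apery d m H = {x | x ∈ H ∧ ∀ i : Fin d, x i < (m : ℤ)} →
      ∀ h ∈ apery d m H, ∀ v ∈ apery d m H, inZE d m (h + v) →
        h + v = fun i : Fin d => if h i = 0 then 0 else (m : ℤ) := by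
    intro h2 h hh v hv hze
    rw [h2] at hh hv
    funext i
    obtain ⟨k, hk⟩ := hze i
    simp only [Pi.add_apply] at hk ⊢
    have h0 : 0 ≤ h i := horth.2.1 _ hh.1 i
    have v0 : 0 ≤ v i := horth.2.1 _ hv.1 i
    have h1 : h i < m := hh.2 i
    have v1 : v i < m := hv.2 i
    have hk0 : 0 ≤ k := by nlinarith
    have hk2 : k < 2 := by nlinarith
    interval_cases k
    · simp only [mul_zero] at hk
      have : h i = 0 := by linarith
      simp [this]; linarith
    · have : h i ≠ 0 := by intro h0'; rw [h0'] at hk; linarith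
      simp [this]; linarith
  -- (3) → (2)
  have p32 : (∀ h ∈ apery d m H, ∀ v ∈ apery d m H, inZE d m (h + v) →
        h + v = fun i : Fin d => if h i = 0 then 0 else (m : ℤ)) →
      apery d m H = {x | x ∈ H ∧ ∀ i : Fin d, x i < (m : ℤ)} := by
    intro h3
    refine Set.Subset.antisymm ?_ (subset_apery horth)
    intro h hh
    refine ⟨hh.1, fun j => ?_⟩
    obtain ⟨v, hv, hdvd⟩ := apery_complement horth hm _ hh.1
    have hze : inZE d m (h + v) := fun i => by
      simpa [Pi.add_apply] using hdvd i
    have hze' : inZE d m (v + h) := fun i => by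
      simpa [Pi.add_apply, add_comm] using hdvd i
    have e1 := congrFun (h3 h hh v hv hze) j
    have e2 := congrFun (h3 v hv h hh hze') j
    simp only [Pi.add_apply] at e1 e2
    have h0 : 0 ≤ h j := horth.2.1 _ hh.1 j
    have v0 : 0 ≤ v j := horth.2.1 _ hv.1 j
    by_cases hz : h j = 0
    · rw [hz]; linarith
    · simp only [hz, if_false] at e1
      by_cases vz : v j = 0
      · simp only [vz, if_true] at e2; omega
      · simp only [vz, if_false] at e2
        have : 0 < v j := lt_of_le_of_ne v0 (Ne.symm vz)
        linarith
  -- (2) → (1)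
  have p21 : apery d m H = {x | x ∈ H ∧ ∀ i : Fin d, x i < (m : ℤ)} →
      IsNormalSg d H := by
    intro h2 g hgcl ⟨n, hn, hng⟩
    have hgpos : ∀ i, 0 ≤ g i := by
      intro i
      have h0 : 0 ≤ (n • g) i := horth.2.1 _ hng i
      simp only [Pi.smul_apply, nsmul_eq_mul] at h0
      nlinarith [h0, (by exact_mod_cast hn : (1:ℤ) ≤ n)]
    obtain ⟨a, ha, b, hb, hab⟩ := closure_eq_diff g hgcl
    -- decompose b
    obtain ⟨w, hw, c₀, hc₀⟩ := apery_decomp horth hm _ hb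
    obtain ⟨v, hv, hdvd⟩ := apery_complement horth hm _ hw.1
    -- w + v = m k with k ≥ 0
    choose k hk using hdvd
    have hk0 : ∀ i, 0 ≤ k i := by
      intro i
      have hwv : 0 ≤ w i + v i :=
        add_nonneg (horth.2.1 _ hw.1 i) (horth.2.1 _ hv.1 i)
      nlinarith [hk i]
    -- g = (a + v) - m C
    have ha' : a + v ∈ H := H.add_mem ha hv.1
    set C : Fin d → ℕ := fun i => (k i + c₀ i).toNat with hC
    have hCcast : ∀ i, (C i : ℤ) = k i + c₀ i := by
      intro i
      simp only [hC, Int.toNat_of_nonneg (add_nonneg (hk0 i) (by positivity : (0:ℤ) ≤ (c₀ i : ℤ)))]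
    have hg2 : g = (a + v) - fun i => (m : ℤ) * C i := by
      funext i
      have e1 := congrFun hab i
      have e2 := congrFun hc₀ i
      simp only [Pi.sub_apply, Pi.add_apply] at e1 e2 ⊢
      rw [hCcast i]
      have := hk i
      ring_nf
      linarith [e1, e2, hk i]
    obtain ⟨u, hu, q, hq⟩ := apery_decomp horth hm _ ha'
    have hult : ∀ i, u i < m := by
      intro i
      have : u ∈ {x | x ∈ H ∧ ∀ i : Fin d, x i < (m : ℤ)} := h2 ▸ hu
      exact this.2 i
    have hqC : ∀ i, C i ≤ q i := by
      intro i
      have e1 := congrFun hg2 i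
      have e2 := congrFun hq i
      simp only [Pi.sub_apply, Pi.add_apply] at e1 e2
      have hgi := hgpos i
      have hui := hult i
      have hu0 : 0 ≤ u i := horth.2.1 _ hu.1 i
      -- g i = u i + m*(q i - C i) ≥ 0, u i < m ⇒ q i ≥ C i
      by_contra hcon
      push_neg at hcon
      have : (q i : ℤ) + 1 ≤ (C i : ℤ) := by exact_mod_cast hcon
      nlinarith [e1, e2]
    have : g = u + fun i => (m : ℤ) * ((q i - C i : ℕ) : ℤ) := by
      funext i
      have e1 := congrFun hg2 i
      have e2 := congrFun hq i
      simp only [Pi.sub_apply, Pi.add_apply] at e1 e2 ⊢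
      have : ((q i - C i : ℕ) : ℤ) = (q i : ℤ) - C i := by
        have := hqC i; push_cast [this]; ring
      rw [this]
      linarith [e1, e2]
    rw [this]
    exact H.add_mem hu.1 (mul_mem_H horth _)
  exact ⟨⟨p12, p21 ⟩, ⟨fun h1 => p23 (p12 h1), fun h3 => p21 (p32 h3)⟩⟩


end AGpaper
end

section
/- Let (H,E) be a simplicial semigroup with H ⊆ ℕ^N, k a field, R = k[H] the semigroup ring, and S = k[ℕE] the subalgebra of R spanned by the monomials t^z with z ∈ ℕb_1+⋯+ℕb_d. Then R is free as an S-module if and only if the monomials {t^h : h ∈ Ap(H,E)} form an S-basis of R; in that case R = ⊕_{h ∈ Ap(H,E)} S·t^h and, equivalently, every element of H can be written uniquely as a + z with a ∈ Ap(H,E) and z ∈ ℕb_1+⋯+ℕb_d. -/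
open scoped Classical

namespace AGpaper

/-- The Apéry set w.r.t. a general family of extreme rays. -/
def aperyG {N d : ℕ} (H : AddSubmonoid (Fin N → ℤ)) (b : Fin d → (Fin N → ℤ)) :
    Set (Fin N → ℤ) :=
  {x | x ∈ H ∧ ∀ i : Fin d, x - b i ∉ H}

/-- The monomial `t^x` in the group algebra `k[ℤ^N]`. -/
noncomputable def mono (k : Type*) [Field k] {N : ℕ} (x : Fin N → ℤ) :
    AddMonoidAlgebra k (Fin N → ℤ) :=
  AddMonoidAlgebra.single x 1

/-- The subalgebra `S = k[ℕE] = k[ℕb₁ + ⋯ + ℕb_d]` of the group algebra. -/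
noncomputable def Ssub (k : Type*) [Field k] {N d : ℕ} (b : Fin d → (Fin N → ℤ)) :
    Subalgebra k (AddMonoidAlgebra k (Fin N → ℤ)) :=
  Algebra.adjoin k {f | ∃ z : Fin N → ℤ, (∃ c : Fin d → ℕ, z = ∑ i, (c i : ℤ) • b i) ∧
    f = mono k z}

/-- `R = k[H]` viewed as an `S`-submodule of the group algebra: the `S`-span of the
monomials `t^h`, `h ∈ H`. -/
noncomputable def Rsmod (k : Type*) [Field k] {N d : ℕ} (H : AddSubmonoid (Fin N → ℤ))
    (b : Fin d → (Fin N → ℤ)) :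
    Submodule ↥(Ssub k b) (AddMonoidAlgebra k (Fin N → ℤ)) :=
  Submodule.span ↥(Ssub k b) {f | ∃ h ∈ H, f = mono k h}

/-!
Every `x ∈ H` is `a + z` with `a` in the Apéry set and `z ∈ ℕE`: subtract extreme rays as long
as the result stays in `H`, which terminates because the coefficients of `n • x` in the `bᵢ` are
unique and drop by `n` at each step. Hence the Apéry monomials always span `R` over `S`, and since
`S • t^a` is supported on `a + ℕE`, they are `S`-independent exactly when the decomposition is
unique. If `R` has any `S`-basis, a graded Nakayama argument shows that `a + z = a' + z'` forces
`z - z' ∈ ℕE`; then `a' = a + (z - z')`, and adding a nonzero element of `ℕE` to an element of `H`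
never lands in the Apéry set, so `z = z'`.
-/

open AddMonoidAlgebra Set

lemma linearIndependent_int_of_linearIndependent_rat_cast {ι σ : Type*} {b : ι → σ → ℤ}
    (h : LinearIndependent ℚ fun i j => (b i j : ℚ)) : LinearIndependent ℤ b :=
  .of_comp ((Int.castAddHom ℚ).toIntLinearMap.compLeft σ) (h.restrict_scalars' ℤ)

section Closure

variable {G ι : Type*} [AddCommGroup G] {b : ι → G}

lemma exists_sub_mem_closure_range_of_ne_zero {w : G} (hw : w ∈ AddSubmonoid.closure (range b))
    (hw0 : w ≠ 0) : ∃ j, w - b j ∈ AddSubmonoid.closure (range b) := by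
  induction hw using AddSubmonoid.closure_induction with
  | mem x hx =>
    obtain ⟨j, rfl⟩ := hx
    exact ⟨j, by simp [zero_mem]⟩
  | zero => exact absurd rfl hw0
  | add x y hx hy ihx ihy =>
    by_cases hx0 : x = 0
    · obtain ⟨j, hj⟩ := ihy (by simpa [hx0] using hw0)
      exact ⟨j, by simpa [hx0] using hj⟩
    · obtain ⟨j, hj⟩ := ihx hx0
      exact ⟨j, by simpa [sub_add_eq_add_sub] using add_mem hj hy⟩

lemma mem_closure_range_iff_exists_sum_natCast_zsmul [Fintype ι] {z : G} :
    z ∈ AddSubmonoid.closure (range b) ↔ ∃ c : ι → ℕ, z = ∑ i, (c i : ℤ) • b i := by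
  simp [AddSubmonoid.mem_closure_range_iff_of_fintype, natCast_zsmul]

lemma eq_of_sum_nsmul_eq_of_linearIndependent [Fintype ι] (hli : LinearIndependent ℤ b)
    {c c' : ι → ℕ} (h : ∑ i, c i • b i = ∑ i, c' i • b i) : c = c' := by
  have hz : ∑ i, ((c i : ℤ) - c' i) • b i = 0 := by
    simp only [sub_smul, Finset.sum_sub_distrib, natCast_zsmul, h, sub_self]
  funext i
  have := Fintype.linearIndependent_iff.mp hli _ hz i
  omega

end Closure

lemma forall_existsUnique_add_iff_injOn {G : Type*} [Add G] {A B H : Set G}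
    (hAB : ∀ a ∈ A, ∀ z ∈ B, a + z ∈ H) (hex : ∀ x ∈ H, ∃ a ∈ A, ∃ z ∈ B, x = a + z) :
    (∀ x ∈ H, ∃! p : G × G, p.1 ∈ A ∧ p.2 ∈ B ∧ x = p.1 + p.2) ↔
      InjOn (fun p : G × G => p.1 + p.2) (A ×ˢ B) := by
  constructor
  · rintro huniq ⟨a, z⟩ ⟨ha, hz⟩ ⟨a', z'⟩ ⟨ha', hz'⟩ (he : a + z = a' + z')
    exact (huniq _ (hAB a ha z hz)).unique ⟨ha, hz, rfl⟩ ⟨ha', hz', he⟩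
  · intro hinj x hx
    obtain ⟨a, ha, z, hz, rfl⟩ := hex x hx
    exact ⟨(a, z), ⟨ha, hz, rfl⟩, fun p ⟨hp1, hp2, he⟩ => hinj ⟨hp1, hp2⟩ ⟨ha, hz⟩ he.symm⟩

section Supported

variable (k : Type*) [CommSemiring k] {G : Type*} [AddMonoid G]

def supportedSubalgebra (P : AddSubmonoid G) : Subalgebra k (AddMonoidAlgebra k G) where
  carrier := {x | ∀ u, x.coeff u ≠ 0 → u ∈ P}
  add_mem' := fun {x y} hx hy u hu => by
    by_cases hxu : x.coeff u = 0
    · exact hy u (by simpa [hxu] using hu)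
    · exact hx u hxu
  mul_mem' := fun {x y} hx hy u hu => by
    obtain ⟨p, hp, q, hq, rfl⟩ :=
      Finset.mem_add.mp (support_coeff_mul_subset x y (Finsupp.mem_support_iff.mpr hu))
    exact P.add_mem (hx p (Finsupp.mem_support_iff.mp hp)) (hy q (Finsupp.mem_support_iff.mp hq))
  algebraMap_mem' := fun r u hu => by
    by_cases hu0 : u = 0
    · exact hu0 ▸ P.zero_mem
    · simp [coe_algebraMap, coeff_single, Ne.symm hu0] at hu

variable {k}

lemma supportedSubalgebra_mono {P Q : AddSubmonoid G} (hPQ : P ≤ Q) :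
    supportedSubalgebra k P ≤ supportedSubalgebra k Q :=
  fun _ hx u hu => hPQ (hx u hu)

lemma single_mem_supportedSubalgebra {P : AddSubmonoid G} {x : G} (hx : x ∈ P) (r : k) :
    single x r ∈ supportedSubalgebra k P := fun u hu => by
  by_cases hux : x = u
  · exact hux ▸ hx
  · simp [coeff_single, hux] at hu

end Supported

section Semigroup

variable {k : Type*} [Field k] {N d : ℕ} {H : AddSubmonoid (Fin N → ℤ)}
  {b : Fin d → (Fin N → ℤ)}

lemma mono_add (x y : Fin N → ℤ) : mono k (x + y) = mono k x * mono k y := by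
  simp [mono, single_mul_single]

lemma mono_ne_zero (x : Fin N → ℤ) : mono k x ≠ 0 := by
  simp [mono]

lemma coeff_mono_mul (x : Fin N → ℤ) (f : AddMonoidAlgebra k (Fin N → ℤ)) (y : Fin N → ℤ) :
    (mono k x * f).coeff y = f.coeff (y - x) := by
  simp [mono, coeff_single_mul_apply, neg_add_eq_sub]

lemma coeff_mono_self (x : Fin N → ℤ) : (mono k x).coeff x = 1 := by
  simp [mono]

lemma mono_mem_Ssub {z : Fin N → ℤ} (hz : z ∈ AddSubmonoid.closure (range b)) :
    mono k z ∈ Ssub k b :=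
  Algebra.subset_adjoin ⟨z, mem_closure_range_iff_exists_sum_natCast_zsmul.mp hz, rfl⟩

lemma Ssub_le_supportedSubalgebra :
    Ssub k b ≤ supportedSubalgebra k (AddSubmonoid.closure (range b)) := by
  refine Algebra.adjoin_le ?_
  rintro _ ⟨z, hz, rfl⟩
  exact single_mem_supportedSubalgebra (mem_closure_range_iff_exists_sum_natCast_zsmul.mpr hz) _

lemma Rsmod_le_supportedSubalgebra (hbH : AddSubmonoid.closure (range b) ≤ H)
    {f : AddMonoidAlgebra k (Fin N → ℤ)} (hf : f ∈ Rsmod k H b) :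
    f ∈ supportedSubalgebra k H := by
  have hSH := Ssub_le_supportedSubalgebra.trans (supportedSubalgebra_mono (k := k) hbH)
  induction hf using Submodule.span_induction with
  | mem x hx =>
    obtain ⟨h, hh, rfl⟩ := hx
    exact single_mem_supportedSubalgebra hh _
  | zero => exact zero_mem _
  | add x y _ _ hx hy => exact add_mem hx hy
  | smul s x _ hx => exact Subalgebra.smul_def s x ▸ mul_mem (hSH s.2) hx

lemma mono_mem_Rsmod {h : Fin N → ℤ} (hh : h ∈ H) : mono k h ∈ Rsmod k H b :=
  Submodule.subset_span ⟨h, hh, rfl⟩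

lemma add_notMem_aperyG (hbH : AddSubmonoid.closure (range b) ≤ H) {v w : Fin N → ℤ} (hv : v ∈ H)
    (hw : w ∈ AddSubmonoid.closure (range b)) (hw0 : w ≠ 0) : v + w ∉ aperyG H b := by
  obtain ⟨j, hj⟩ := exists_sub_mem_closure_range_of_ne_zero hw hw0
  refine fun hap => hap.2 j ?_
  rw [add_sub_assoc]
  exact H.add_mem hv (hbH hj)

lemma exists_aperyG_add (hli : LinearIndependent ℤ b) {n : ℕ} (hn : 0 < n)
    (hsimp : ∀ x ∈ H, ∃ c : Fin d → ℕ, (n : ℤ) • x = ∑ i, (c i : ℤ) • b i) :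
    ∀ x ∈ H, ∃ a ∈ aperyG H b, ∃ z ∈ AddSubmonoid.closure (range b), x = a + z := by
  simp only [natCast_zsmul] at hsimp
  suffices key : ∀ m, ∀ x ∈ H, ∀ c : Fin d → ℕ, n • x = ∑ i, c i • b i → ∑ i, c i = m →
      ∃ a ∈ aperyG H b, ∃ z ∈ AddSubmonoid.closure (range b), x = a + z by
    intro x hx
    obtain ⟨c, hc⟩ := hsimp x hx
    exact key _ x hx c hc rfl
  intro m
  induction m using Nat.strong_induction_on with | _ m ih => ?_
  intro x hx c hc hm
  by_cases hap : ∀ i, x - b i ∉ H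
  · exact ⟨x, ⟨hx, hap⟩, 0, zero_mem _, (add_zero x).symm⟩
  obtain ⟨i, hi⟩ : ∃ i, x - b i ∈ H := by simpa using hap
  obtain ⟨c', hc'⟩ := hsimp _ hi
  have hcc' : c = c' + Pi.single i n := by
    refine eq_of_sum_nsmul_eq_of_linearIndependent hli ?_
    simp only [Pi.add_apply, add_smul, Finset.sum_add_distrib, ← hc', ← hc]
    simp only [Pi.single_apply, ite_smul, zero_smul, Finset.sum_ite_eq', Finset.mem_univ,
      if_true, ← smul_add, sub_add_cancel]
  have hlt : ∑ j, c' j < m := by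
    rw [← hm, hcc']
    simp only [Pi.add_apply, Finset.sum_add_distrib, Fintype.sum_pi_single']
    omega
  obtain ⟨a, ha, z, hz, hxz⟩ := ih _ hlt _ hi c' hc' rfl
  refine ⟨a, ha, z + b i, add_mem hz (AddSubmonoid.subset_closure ⟨i, rfl⟩), ?_⟩
  rw [← add_assoc, ← hxz, sub_add_cancel]

lemma span_mono_aperyG_eq_Rsmod
    (hex : ∀ x ∈ H, ∃ a ∈ aperyG H b, ∃ z ∈ AddSubmonoid.closure (range b), x = a + z) :
    Submodule.span ↥(Ssub k b) {f | ∃ a ∈ aperyG H b, f = mono k a} = Rsmod k H b := by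
  refine le_antisymm (Submodule.span_le.mpr ?_) (Submodule.span_le.mpr ?_)
  · rintro _ ⟨a, ha, rfl⟩
    exact mono_mem_Rsmod ha.1
  · rintro _ ⟨x, hx, rfl⟩
    obtain ⟨a, ha, z, hz, rfl⟩ := hex x hx
    have : mono k (a + z) = (⟨mono k z, mono_mem_Ssub hz⟩ : ↥(Ssub k b)) • mono k a := by
      rw [mono_add, mul_comm]; rfl
    rw [SetLike.mem_coe, this]
    exact Submodule.smul_mem _ _ (Submodule.subset_span ⟨a, ha, rfl⟩)

lemma coeff_mul_eq_zero_of_mem_aperyG (hbH : AddSubmonoid.closure (range b) ≤ H)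
    {s f : AddMonoidAlgebra k (Fin N → ℤ)} (hs : s ∈ Ssub k b) (hs0 : s.coeff 0 = 0)
    (hf : f ∈ Rsmod k H b) {a : Fin N → ℤ} (ha : a ∈ aperyG H b) : (s * f).coeff a = 0 := by
  by_contra hne
  obtain ⟨u, hu, v, hv, rfl⟩ :=
    Finset.mem_add.mp (support_coeff_mul_subset s f (Finsupp.mem_support_iff.mpr hne))
  rw [Finsupp.mem_support_iff] at hu hv
  have hu0 : u ≠ 0 := by rintro rfl; exact hu hs0
  rw [add_comm] at ha
  exact add_notMem_aperyG hbH (Rsmod_le_supportedSubalgebra hbH hf v hv)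
    (Ssub_le_supportedSubalgebra hs u hu) hu0 ha

lemma injOn_of_linearIndependent
    (hLI : LinearIndependent ↥(Ssub k b) (fun a : aperyG H b => mono k (a : Fin N → ℤ))) :
    InjOn (fun p => p.1 + p.2) (aperyG H b ×ˢ (AddSubmonoid.closure (range b) : Set _)) := by
  rintro ⟨a, z⟩ ⟨ha, hz⟩ ⟨a', z'⟩ ⟨ha', hz'⟩ (he : a + z = a' + z')
  obtain rfl : a = a' := by
    by_contra hne
    have hpair := (LinearIndepOn.pair_iff _ (fun h => hne (congrArg Subtype.val h))).mp
      (hLI.linearIndepOn (s := {⟨a, ha⟩, ⟨a', ha'⟩}))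
      ⟨mono k z, mono_mem_Ssub hz⟩ (-⟨mono k z', mono_mem_Ssub hz'⟩)
      (by simp [Subalgebra.smul_def, ← mono_add, add_comm, he])
    exact mono_ne_zero z (congrArg Subtype.val hpair.1)
  exact Prod.ext rfl (add_left_cancel he)

/-- Reading off the coefficient at `a₀ + w` isolates the term of `a₀`: by injectivity, no
other `a` has `a₀ + w - a ∈ ℕE`. -/
lemma linearIndependent_of_injOn
    (hinj : InjOn (fun p => p.1 + p.2) (aperyG H b ×ˢ (AddSubmonoid.closure (range b) : Set _))) :
    LinearIndependent ↥(Ssub k b) (fun a : aperyG H b => mono k (a : Fin N → ℤ)) := by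
  rw [linearIndependent_iff]
  intro l hl
  by_contra hne
  obtain ⟨a₀, ha₀⟩ : ∃ a₀, l a₀ ≠ 0 := by simpa [Finsupp.ext_iff] using hne
  obtain ⟨w, hw⟩ : ∃ w, (l a₀ : AddMonoidAlgebra k (Fin N → ℤ)).coeff w ≠ 0 := by
    by_contra! h
    exact ha₀ (Subtype.ext (coeff_inj.mp (Finsupp.ext h)))
  have hwM := Ssub_le_supportedSubalgebra (l a₀).2 w hw
  have hcoeff : ∀ a, ((l a • mono k (a : Fin N → ℤ)).coeff ((a₀ : Fin N → ℤ) + w)) =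
      (l a : AddMonoidAlgebra k (Fin N → ℤ)).coeff (a₀ + w - a) := fun a => by
    rw [Subalgebra.smul_def, smul_eq_mul, mul_comm, coeff_mono_mul]
  have key : (Finsupp.linearCombination _ (fun a : aperyG H b => mono k (a : Fin N → ℤ)) l).coeff
      ((a₀ : Fin N → ℤ) + w) = (l a₀ : AddMonoidAlgebra k (Fin N → ℤ)).coeff w := by
    rw [Finsupp.linearCombination_apply, Finsupp.sum, coeff_sum, Finset.sum_apply',
      Finset.sum_eq_single a₀]
    · rw [hcoeff, add_sub_cancel_left]
    · intro a _ ha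
      rw [hcoeff]
      by_contra hc
      have hM := Ssub_le_supportedSubalgebra (l a).2 _ hc
      exact ha (Subtype.ext (congrArg Prod.fst
        (@hinj (_, _) ⟨a.2, hM⟩ (_, w) ⟨a₀.2, hwM⟩ (add_sub_cancel _ _))))
    · intro h
      exact absurd (Finsupp.notMem_support_iff.mp h) ha₀
  rw [hl] at key
  exact hw key.symm

/-- Graded Nakayama: comparing `t^z • t^a = t^{z'} • t^{a'}` in coordinates at the monomial
`t^z` forces every coordinate of `t^a` into the positive part of `S` when `z - z' ∉ ℕE`,
and then `t^a` has no coefficient at the Apéry element `a`. -/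
lemma sub_mem_closure_of_basis (hbH : AddSubmonoid.closure (range b) ≤ H) {ι : Type*}
    (B : Module.Basis ι ↥(Ssub k b) (Rsmod k H b)) {a a' z z' : Fin N → ℤ} (ha : a ∈ aperyG H b)
    (ha' : a' ∈ aperyG H b) (hz : z ∈ AddSubmonoid.closure (range b))
    (hz' : z' ∈ AddSubmonoid.closure (range b)) (he : a + z = a' + z') :
    z - z' ∈ AddSubmonoid.closure (range b) := by
  by_contra hzz
  let x : Rsmod k H b := ⟨mono k a, mono_mem_Rsmod ha.1⟩
  let x' : Rsmod k H b := ⟨mono k a', mono_mem_Rsmod ha'.1⟩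
  let sz : Ssub k b := ⟨mono k z, mono_mem_Ssub hz⟩
  let sz' : Ssub k b := ⟨mono k z', mono_mem_Ssub hz'⟩
  have hx : sz • x = sz' • x' := by
    ext1
    change mono k z * mono k a = mono k z' * mono k a'
    rw [← mono_add, ← mono_add, add_comm, he, add_comm]
  have hrepr : ∀ i, (B.repr x i : AddMonoidAlgebra k (Fin N → ℤ)).coeff 0 = 0 := by
    intro i
    have h := congrArg (fun y => ((B.repr y i : Ssub k b) : AddMonoidAlgebra k _).coeff z) hx
    simp only [map_smul, Finsupp.smul_apply, smul_eq_mul, Subalgebra.coe_mul] at h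
    rw [coeff_mono_mul, coeff_mono_mul, sub_self] at h
    rw [h]
    by_contra hc
    exact hzz (Ssub_le_supportedSubalgebra (B.repr x' i).2 _ hc)
  have hxa : (x : AddMonoidAlgebra k (Fin N → ℤ)).coeff a = 0 := by
    rw [← B.linearCombination_repr x, Finsupp.linearCombination_apply, Finsupp.sum,
      Submodule.coe_sum, coeff_sum, Finset.sum_apply']
    refine Finset.sum_eq_zero fun i _ => ?_
    rw [Submodule.coe_smul, Subalgebra.smul_def, smul_eq_mul]
    exact coeff_mul_eq_zero_of_mem_aperyG hbH (B.repr x i).2 (hrepr i) (B i).2 ha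
  exact one_ne_zero (coeff_mono_self (k := k) a ▸ hxa)

lemma injOn_of_basis (hbH : AddSubmonoid.closure (range b) ≤ H) {ι : Type*}
    (B : Module.Basis ι ↥(Ssub k b) (Rsmod k H b)) :
    InjOn (fun p => p.1 + p.2) (aperyG H b ×ˢ (AddSubmonoid.closure (range b) : Set _)) := by
  rintro ⟨a, z⟩ ⟨ha, hz⟩ ⟨a', z'⟩ ⟨ha', hz'⟩ (he : a + z = a' + z')
  obtain rfl : z = z' := by
    by_contra hne
    refine add_notMem_aperyG hbH ha.1 (sub_mem_closure_of_basis hbH B ha ha' hz hz' he)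
      (sub_ne_zero.mpr hne) ?_
    rwa [← add_sub_assoc, he, add_sub_cancel_right]
  exact Prod.ext (add_right_cancel he) rfl

end Semigroup

/-- `R = k[H]` is free as an `S = k[ℕE]`-module iff the monomials
`{t^h : h ∈ Ap(H,E)}` form an `S`-basis of `R`; and the latter holds iff every element
of `H` is uniquely `a + z` with `a ∈ Ap(H,E)` and `z ∈ ℕb₁+⋯+ℕb_d`. -/
theorem free_iff_apery_basis (k : Type*) [Field k] {N d : ℕ}
    (H : AddSubmonoid (Fin N → ℤ)) (b : Fin d → (Fin N → ℤ))
    (hH : IsSimplicial N d H b) :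
    ((∃ (ι : Type) (fam : ι → AddMonoidAlgebra k (Fin N → ℤ)),
        (∀ i, fam i ∈ Rsmod k H b) ∧ LinearIndependent ↥(Ssub k b) fam ∧
        Submodule.span ↥(Ssub k b) (Set.range fam) = Rsmod k H b) ↔
      (LinearIndependent ↥(Ssub k b) (fun a : aperyG H b => mono k (a : Fin N → ℤ)) ∧
        Submodule.span ↥(Ssub k b) {f | ∃ a ∈ aperyG H b, f = mono k a} = Rsmod k H b)) ∧
    ((LinearIndependent ↥(Ssub k b) (fun a : aperyG H b => mono k (a : Fin N → ℤ)) ∧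
        Submodule.span ↥(Ssub k b) {f | ∃ a ∈ aperyG H b, f = mono k a} = Rsmod k H b) ↔
      (∀ x ∈ H, ∃! p : (Fin N → ℤ) × (Fin N → ℤ),
        p.1 ∈ aperyG H b ∧ (∃ c : Fin d → ℕ, p.2 = ∑ i, (c i : ℤ) • b i) ∧
        x = p.1 + p.2)) := by
  obtain ⟨-, hb, hli, n, hn, hsimp⟩ := hH
  have hbH : AddSubmonoid.closure (range b) ≤ H :=
    AddSubmonoid.closure_le.mpr (range_subset_iff.mpr hb)
  have hex := exists_aperyG_add (linearIndependent_int_of_linearIndependent_rat_cast hli) hn hsimp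
  have hspan := span_mono_aperyG_eq_Rsmod (k := k) hex
  refine ⟨⟨?_, ?_⟩, ?_⟩
  · rintro ⟨ι, fam, -, hfam, hfam_span⟩
    let B := (Module.Basis.span hfam).map (LinearEquiv.ofEq _ _ hfam_span)
    exact ⟨linearIndependent_of_injOn (injOn_of_basis hbH B), hspan⟩
  · rintro ⟨hLI, -⟩
    refine ⟨aperyG H b, fun a => mono k a, fun a => mono_mem_Rsmod a.2.1, hLI, ?_⟩
    rw [← hspan]
    congr 1
    ext f
    simp [eq_comm]
  · simp only [← mem_closure_range_iff_exists_sum_natCast_zsmul]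
    have hAH : ∀ a ∈ aperyG H b, ∀ z ∈ AddSubmonoid.closure (range b), a + z ∈ H :=
      fun a ha z hz => H.add_mem ha.1 (hbH hz)
    have huniq := forall_existsUnique_add_iff_injOn hAH hex
    simp only [SetLike.mem_coe] at huniq
    rw [huniq]
    exact ⟨fun h => injOn_of_linearIndependent h.1, fun h => ⟨linearIndependent_of_injOn h, hspan⟩⟩

end AGpaper
end

section
/- Let (H,E) be an orthogonal semigroup of order m and rank d satisfying the CM condition. Then for every n ∈ ℤ the set {x ∈ ω_H : deg x = n} is finite, it is empty for n sufficiently negative, and the following identity of formal Laurent series holds: (1 − t^m)^d · Σ_{n ∈ ℤ} #{x ∈ ω_H : deg x = n}·t^n = Σ_{h ∈ Ap(H,E)} t^{dm − deg h}. (This expresses the identity P_{K_R}(t) = (−1)^d · P_{k[H]}(t^{−1}) between the Hilbert series of the graded canonical module K_R and that of R = k[H].) -/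
open scoped Classical

namespace AGpaper

/-- The degree of an integer vector: sum of coordinates. -/
def degZ {d : ℕ} (x : Fin d → ℤ) : ℤ := ∑ i, x i

/-- The socle: maximal elements of the Apéry set with respect to `≤_H`. -/
def soc (d m : ℕ) (H : AddSubmonoid (Fin d → ℤ)) : Set (Fin d → ℤ) :=
  {x | x ∈ apery d m H ∧ ∀ y ∈ apery d m H, y - x ∈ H → x = y}

/-- The CM condition: every element of `G(H)` is uniquely `a + z`, `a ∈ Ap(H,E)`, `z ∈ ℤE`. -/
def CMcond (d m : ℕ) (H : AddSubmonoid (Fin d → ℤ)) : Prop :=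
  ∀ g ∈ AddSubgroup.closure (H : Set (Fin d → ℤ)),
    ∃! a, a ∈ apery d m H ∧ inZE d m (g - a)

/-- `ω_H = {-w + m e₁ + ⋯ + m e_d + h : w ∈ Soc(H,E), h ∈ H}`. -/
def omegaH (d m : ℕ) (H : AddSubmonoid (Fin d → ℤ)) : Set (Fin d → ℤ) :=
  {x | ∃ w ∈ soc d m H, ∃ h ∈ H, x = -w + (fun _ => (m : ℤ)) + h}

/-! Auxiliary definitions -/

/-- The vector `(m c₁, …, m c_d)` for `c ∈ ℕ^d`. -/
def mcv {d : ℕ} (m : ℕ) (c : Fin d → ℕ) : Fin d → ℤ := fun i => (m : ℤ) * c i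

/-- The vector `(m, …, m)`. -/
def onesV (d m : ℕ) : Fin d → ℤ := fun _ => (m : ℤ)

/-- 0/1 indicator of a finset. -/
def indC {d : ℕ} (S : Finset (Fin d)) : Fin d → ℕ := fun i => if i ∈ S then 1 else 0

section Aux
variable {d m : ℕ} {H : AddSubmonoid (Fin d → ℤ)}

lemma degZ_add (x y : Fin d → ℤ) : degZ (x + y) = degZ x + degZ y := by
  simp [degZ, Finset.sum_add_distrib]

lemma degZ_sub (x y : Fin d → ℤ) : degZ (x - y) = degZ x - degZ y := by
  simp [degZ, Finset.sum_sub_distrib]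

lemma degZ_neg (x : Fin d → ℤ) : degZ (-x) = - degZ x := by simp [degZ]

lemma degZ_onesV : degZ (onesV d m) = (d : ℤ) * m := by
  simp [degZ, onesV, Finset.sum_const, mul_comm]

lemma degZ_mcv (c : Fin d → ℕ) : degZ (mcv m c) = (m : ℤ) * ∑ i, (c i : ℤ) := by
  simp [degZ, mcv, Finset.mul_sum]

lemma degZ_single (i : Fin d) (v : ℤ) : degZ (Pi.single i v) = v := by
  simp [degZ, Pi.single_apply, Finset.sum_ite_eq']

lemma mcv_zero : mcv m (0 : Fin d → ℕ) = 0 := by funext i; simp [mcv]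

lemma mcv_add (c c' : Fin d → ℕ) : mcv m (c + c') = mcv m c + mcv m c' := by
  funext i; simp [mcv]; push_cast; ring

lemma degZ_mcv_nonneg (c : Fin d → ℕ) : 0 ≤ degZ (mcv m c) := by
  rw [degZ_mcv]; positivity

lemma mcv_mem (horth : IsOrthogonal d m H) (c : Fin d → ℕ) : mcv m c ∈ H := by
  have h : mcv m c = ∑ i : Fin d, c i • Pi.single i (m : ℤ) := by
    funext j
    simp [mcv, Finset.sum_apply, Pi.single_apply, smul_ite, Finset.sum_ite_eq, mul_comm]
  rw [h]
  exact AddSubmonoid.sum_mem _ fun i _ => AddSubmonoid.nsmul_mem _ (horth.2.2.1 i) _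

lemma nonneg_of_mem (horth : IsOrthogonal d m H) {x} (hx : x ∈ H) (i : Fin d) : 0 ≤ x i :=
  horth.2.1 x hx i

lemma degZ_nonneg_of_mem (horth : IsOrthogonal d m H) {x} (hx : x ∈ H) : 0 ≤ degZ x :=
  Finset.sum_nonneg fun i _ => nonneg_of_mem horth hx i

lemma eq_zero_of_deg_zero (horth : IsOrthogonal d m H) {x} (hx : x ∈ H) (h : degZ x = 0) :
    x = 0 := by
  funext i
  have := (Finset.sum_eq_zero_iff_of_nonneg (fun j _ => nonneg_of_mem horth hx j)).mp h
  exact this i (Finset.mem_univ i)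

lemma zero_mem_apery (hm : 1 ≤ m) (horth : IsOrthogonal d m H) : (0 : Fin d → ℤ) ∈ apery d m H := by
  refine ⟨H.zero_mem, fun i hmem => ?_⟩
  have := nonneg_of_mem horth hmem i
  simp [Pi.single_apply] at this
  omega

lemma coord_le_deg (horth : IsOrthogonal d m H) {x} (hx : x ∈ H) (i : Fin d) : x i ≤ degZ x :=
  Finset.single_le_sum (fun j _ => nonneg_of_mem horth hx j) (Finset.mem_univ i)

end Aux

section Main
variable {d m : ℕ} {H : AddSubmonoid (Fin d → ℤ)}

lemma descend (hm : 1 ≤ m) (horth : IsOrthogonal d m H) :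
    ∀ u ∈ H, ∃ a ∈ apery d m H, ∃ c : Fin d → ℕ, u = a + mcv m c := by
  suffices h : ∀ n : ℕ, ∀ u ∈ H, (degZ u).toNat ≤ n →
      ∃ a ∈ apery d m H, ∃ c : Fin d → ℕ, u = a + mcv m c by
    intro u hu; exact h (degZ u).toNat u hu le_rfl
  intro n
  induction n with
  | zero =>
    intro u hu hdeg
    have h0 : degZ u = 0 := by
      have := degZ_nonneg_of_mem horth hu; omega
    refine ⟨0, zero_mem_apery hm horth, 0, ?_⟩
    rw [eq_zero_of_deg_zero horth hu h0, mcv_zero, add_zero]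
  | succ n ih =>
    intro u hu hdeg
    by_cases ha : u ∈ apery d m H
    · exact ⟨u, ha, 0, by rw [mcv_zero, add_zero]⟩
    · have hex : ∃ i, u - Pi.single i (m : ℤ) ∈ H := by
        by_contra hcon
        push_neg at hcon
        exact ha ⟨hu, hcon⟩
      obtain ⟨i, hi⟩ := hex
      have hdeg' : degZ (u - Pi.single i (m : ℤ)) = degZ u - m := by
        rw [degZ_sub, degZ_single]
      have hnn : 0 ≤ degZ (u - Pi.single i (m : ℤ)) := degZ_nonneg_of_mem horth hi
      have hm' : (1 : ℤ) ≤ (m : ℤ) := by exact_mod_cast hm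
      obtain ⟨a, ha', c, hc⟩ := ih _ hi (by omega)
      refine ⟨a, ha', c + Pi.single i 1, ?_⟩
      have hmc : mcv m (c + Pi.single i 1) = mcv m c + Pi.single i (m : ℤ) := by
        funext j
        simp only [mcv, Pi.add_apply, Pi.single_apply]
        split_ifs <;> push_cast <;> ring
      rw [hmc, ← add_assoc, ← hc, sub_add_cancel]

lemma apery_unique (hCM : CMcond d m H) {a b : Fin d → ℤ}
    (ha : a ∈ apery d m H) (hb : b ∈ apery d m H) (hz : inZE d m (a - b)) : a = b := by
  obtain ⟨x, -, hx⟩ := hCM a (AddSubgroup.subset_closure ha.1)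
  have h1 : a = x := hx a ⟨ha, fun i => by simp⟩
  have h2 : b = x := hx b ⟨hb, hz⟩
  rw [h1, h2]

lemma exists_soc_above (horth : IsOrthogonal d m H)
    (A : Finset (Fin d → ℤ)) (hA : (A : Set (Fin d → ℤ)) = apery d m H)
    {a : Fin d → ℤ} (ha : a ∈ apery d m H) : ∃ w ∈ soc d m H, w - a ∈ H := by
  have hmemA : ∀ y, y ∈ A ↔ y ∈ apery d m H := fun y => by rw [← hA]; exact Iff.rfl
  set B := A.filter (fun b => b - a ∈ H) with hB
  have hBne : B.Nonempty := ⟨a, Finset.mem_filter.2 ⟨(hmemA a).2 ha, by simpa using H.zero_mem⟩⟩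
  obtain ⟨w, hwB, hmax⟩ := Finset.exists_max_image B degZ hBne
  have hwf := Finset.mem_filter.1 hwB
  have hwAp : w ∈ apery d m H := (hmemA w).1 hwf.1
  refine ⟨w, ⟨hwAp, ?_⟩, hwf.2⟩
  intro y hy hyw
  have hyB : y ∈ B := Finset.mem_filter.2 ⟨(hmemA y).2 hy, by
    have : (y - w) + (w - a) ∈ H := H.add_mem hyw hwf.2
    simpa [sub_add_sub_cancel] using this⟩
  have hle : degZ y ≤ degZ w := hmax y hyB
  have h0 : degZ (y - w) = 0 := by
    have := degZ_nonneg_of_mem horth hyw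
    rw [degZ_sub] at this ⊢
    omega
  have := eq_zero_of_deg_zero horth hyw h0
  have := sub_eq_zero.mp this
  exact this.symm

end Main

section Main2
variable {d m : ℕ} {H : AddSubmonoid (Fin d → ℤ)}

lemma inZE_mcv (c : Fin d → ℕ) : inZE d m (mcv m c) := fun i => ⟨c i, rfl⟩

lemma mem_omega_iff (hm : 1 ≤ m) (horth : IsOrthogonal d m H) (hCM : CMcond d m H)
    (A : Finset (Fin d → ℤ)) (hA : (A : Set (Fin d → ℤ)) = apery d m H) {x : Fin d → ℤ} :
    x ∈ omegaH d m H ↔ ∃ a ∈ apery d m H, ∃ c : Fin d → ℕ, x = onesV d m - a + mcv m c := by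
  constructor
  · rintro ⟨w, hw, h, hh, rfl⟩
    have hg : w - h ∈ AddSubgroup.closure (H : Set (Fin d → ℤ)) :=
      sub_mem (AddSubgroup.subset_closure hw.1.1) (AddSubgroup.subset_closure hh)
    obtain ⟨a, ⟨haAp, haz⟩, -⟩ := hCM (w - h) hg
    obtain ⟨b, hb, c, hbc⟩ := descend hm horth (a + h) (H.add_mem haAp.1 hh)
    have hb' : b = a + h - mcv m c := by rw [hbc]; ring
    have hbw : b = w := by
      refine apery_unique hCM hb hw.1 (fun i => ?_)
      have h1 : (b - w) i = -((m : ℤ) * c i) - ((w - h - a) i) := by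
        simp only [Pi.sub_apply, hb', Pi.add_apply, mcv]
        ring
      rw [h1]
      exact dvd_sub (dvd_neg.mpr ⟨c i, rfl⟩) (haz i)
    refine ⟨a, haAp, c, ?_⟩
    have hh' : h = w + mcv m c - a := by rw [← hbw, ← hbc]; ring
    rw [hh']
    funext i
    simp only [onesV, Pi.add_apply, Pi.sub_apply, Pi.neg_apply, mcv]
    ring
  · rintro ⟨a, ha, c, rfl⟩
    obtain ⟨w, hw, hwa⟩ := exists_soc_above horth A hA ha
    refine ⟨w, hw, (w - a) + mcv m c, H.add_mem hwa (mcv_mem horth c), ?_⟩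
    funext i
    simp only [onesV, Pi.add_apply, Pi.sub_apply, Pi.neg_apply, mcv]
    ring

lemma omega_unique (hm : 1 ≤ m) (hCM : CMcond d m H) {a b : Fin d → ℤ} {c c' : Fin d → ℕ}
    (ha : a ∈ apery d m H) (hb : b ∈ apery d m H)
    (h : onesV d m - a + mcv m c = onesV d m - b + mcv m c') : a = b ∧ c = c' := by
  have hpt : ∀ i, a i - b i = (m : ℤ) * c i - (m : ℤ) * c' i := by
    intro i
    have h0 := congrFun h i
    simp only [onesV, Pi.add_apply, Pi.sub_apply, mcv] at h0
    linarith
  have hab : a = b := by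
    refine apery_unique hCM ha hb (fun i => ?_)
    have : (a - b) i = (m : ℤ) * ((c i : ℤ) - c' i) := by
      simp only [Pi.sub_apply]; rw [hpt i]; ring
    exact ⟨_, this⟩
  refine ⟨hab, ?_⟩
  funext i
  have h1 := hpt i
  rw [hab] at h1
  have hm0 : (m : ℤ) ≠ 0 := by
    have h9 : m ≠ 0 := by omega
    exact_mod_cast h9
  have : (c i : ℤ) = c' i := by
    have h2 : (m : ℤ) * c i = (m : ℤ) * c' i := by linarith
    exact mul_left_cancel₀ hm0 h2
  exact_mod_cast this

lemma shift_mem_iff (hm : 1 ≤ m) (horth : IsOrthogonal d m H) (hCM : CMcond d m H)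
    (A : Finset (Fin d → ℤ)) (hA : (A : Set (Fin d → ℤ)) = apery d m H)
    {a : Fin d → ℤ} {c : Fin d → ℕ} (ha : a ∈ apery d m H) (S : Finset (Fin d)) :
    (onesV d m - a + mcv m c) - mcv m (indC S) ∈ omegaH d m H ↔ ∀ i ∈ S, 1 ≤ c i := by
  constructor
  · intro hx
    rw [mem_omega_iff hm horth hCM A hA] at hx
    obtain ⟨b, hb, c', hc'⟩ := hx
    have hpt : ∀ i, a i - b i = (m : ℤ) * c i - (m : ℤ) * indC S i - (m : ℤ) * c' i := by
      intro i
      have h0 := congrFun hc' i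
      simp only [onesV, Pi.add_apply, Pi.sub_apply, mcv] at h0
      linarith
    have hab : a = b := by
      refine apery_unique hCM ha hb (fun i => ?_)
      have : (a - b) i = (m : ℤ) * ((c i : ℤ) - indC S i - c' i) := by
        simp only [Pi.sub_apply]; rw [hpt i]; ring
      exact ⟨_, this⟩
    intro i hiS
    have h1 := hpt i
    rw [hab] at h1
    have hm0 : (0 : ℤ) < (m : ℤ) := by exact_mod_cast hm
    have hind : indC S i = 1 := by simp [indC, hiS]
    rw [hind] at h1
    by_contra hci
    push_neg at hci
    have hc0 : c i = 0 := by omega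
    rw [hc0] at h1
    have hcn : (0 : ℤ) ≤ (c' i : ℤ) := Int.natCast_nonneg _
    push_cast at h1
    nlinarith
  · intro hc1
    rw [mem_omega_iff hm horth hCM A hA]
    refine ⟨a, ha, c - indC S, ?_⟩
    funext i
    simp only [onesV, Pi.add_apply, Pi.sub_apply, mcv]
    have hle : indC S i ≤ c i := by
      by_cases hiS : i ∈ S
      · simpa [indC, hiS] using hc1 i hiS
      · simp [indC, hiS]
    have : ((c i - indC S i : ℕ) : ℤ) = (c i : ℤ) - indC S i := by
      omega
    rw [this]
    ring

end Main2

/-- For a Cohen–Macaulay orthogonal semigroup, the degree-`n` slices of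
`ω_H` are finite, empty for `n` sufficiently negative, and the Laurent series identity
`(1 - t^m)^d · Σ_{n ∈ ℤ} #{x ∈ ω_H : deg x = n} t^n = Σ_{h ∈ Ap(H,E)} t^{dm - deg h}`
holds (stated coefficientwise, expanding `(1 - t^m)^d` by the binomial theorem). -/
theorem canonical_hilbert_series {d m : ℕ} (hd : 1 ≤ d) (hm : 1 ≤ m)
    (H : AddSubmonoid (Fin d → ℤ)) (horth : IsOrthogonal d m H)
    (hCM : CMcond d m H)
    (A : Finset (Fin d → ℤ)) (hA : (A : Set (Fin d → ℤ)) = apery d m H) :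
    (∀ n : ℤ, {x | x ∈ omegaH d m H ∧ degZ x = n}.Finite) ∧
    (∃ n₀ : ℤ, ∀ n : ℤ, n < n₀ → {x | x ∈ omegaH d m H ∧ degZ x = n} = ∅) ∧
    (∀ n : ℤ,
      ∑ j ∈ Finset.range (d + 1),
        (-1 : ℤ) ^ j * (d.choose j : ℤ) *
          ({x | x ∈ omegaH d m H ∧ degZ x = n - (j : ℤ) * (m : ℤ)}.ncard : ℤ) =
      ((A.filter (fun h => (d : ℤ) * (m : ℤ) - degZ h = n)).card : ℤ)) := by
  classical
  have hmemA : ∀ y, y ∈ A ↔ y ∈ apery d m H := fun y => by rw [← hA]; exact Iff.rfl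
  have hAne : A.Nonempty := ⟨0, (hmemA 0).2 (zero_mem_apery hm horth)⟩
  set MA : ℤ := A.sup' hAne degZ with hMAdef
  have hMAle : ∀ a ∈ apery d m H, degZ a ≤ MA := fun a haa =>
    Finset.le_sup' degZ ((hmemA a).2 haa)
  -- (1) finiteness of slices
  have hfin : ∀ n : ℤ, {x | x ∈ omegaH d m H ∧ degZ x = n}.Finite := by
    intro n
    set lo : ℤ := min ((m : ℤ) - MA) 0 with hlodef
    have hlo : ∀ x ∈ omegaH d m H, ∀ i, lo ≤ x i := by
      intro x hx i
      rw [mem_omega_iff hm horth hCM A hA] at hx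
      obtain ⟨a, ha, c, rfl⟩ := hx
      have h1 : a i ≤ MA := le_trans (coord_le_deg horth ha.1 i) (hMAle a ha)
      have h2 : (0 : ℤ) ≤ (m : ℤ) * c i := by positivity
      have h3 : (onesV d m - a + mcv m c) i = (m : ℤ) - a i + (m : ℤ) * c i := by
        simp [onesV, mcv]
      have h4 := min_le_left ((m : ℤ) - MA) (0 : ℤ)
      rw [h3]
      linarith
    have hsub : {x | x ∈ omegaH d m H ∧ degZ x = n} ⊆
        Set.pi Set.univ (fun _ : Fin d => Set.Icc lo (n - ((d - 1 : ℕ) : ℤ) * lo)) := by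
      rintro x ⟨hx, hdeg⟩
      refine fun i _ => ⟨hlo x hx i, ?_⟩
      have hsum : ∑ j ∈ Finset.univ.erase i, x j + x i = ∑ j, x j :=
        Finset.sum_erase_add _ _ (Finset.mem_univ i)
      have hcard : (Finset.univ.erase i).card = d - 1 := by
        rw [Finset.card_erase_of_mem (Finset.mem_univ i), Finset.card_univ, Fintype.card_fin]
      have hgelo : ((d - 1 : ℕ) : ℤ) * lo ≤ ∑ j ∈ Finset.univ.erase i, x j := by
        have := Finset.card_nsmul_le_sum (Finset.univ.erase i) x lo (fun j _ => hlo x hx j)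
        rwa [hcard, nsmul_eq_mul] at this
      have hdz : (∑ j, x j) = n := hdeg
      linarith
    exact Set.Finite.subset (Set.Finite.pi (fun i => Set.finite_Icc _ _)) hsub
  -- (2) emptiness for small degree
  have hne : ∀ n : ℤ, n < (d : ℤ) * m - MA → {x | x ∈ omegaH d m H ∧ degZ x = n} = ∅ := by
    intro n hn
    ext x
    simp only [Set.mem_setOf_eq, Set.mem_empty_iff_false, iff_false, not_and]
    intro hx hdeg
    rw [mem_omega_iff hm horth hCM A hA] at hx
    obtain ⟨a, ha, c, hxe⟩ := hx
    have hda : degZ a ≤ MA := hMAle a ha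
    have hcs : (0 : ℤ) ≤ ∑ i, (c i : ℤ) := Finset.sum_nonneg fun i _ => Int.natCast_nonneg _
    have hmc : (0 : ℤ) ≤ (m : ℤ) * ∑ i, (c i : ℤ) := by positivity
    have : degZ x = (d : ℤ) * m - degZ a + (m : ℤ) * ∑ i, (c i : ℤ) := by
      rw [hxe, degZ_add, degZ_sub, degZ_onesV, degZ_mcv]
    linarith
  refine ⟨hfin, ⟨(d : ℤ) * m - MA, hne⟩, ?_⟩
  -- (3) the coefficientwise identity
  intro n
  set B : Finset (Fin d → ℤ) := (hfin n).toFinset with hBdef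
  have hBmem : ∀ x, x ∈ B ↔ x ∈ omegaH d m H ∧ degZ x = n := by
    intro x; rw [hBdef, Set.Finite.mem_toFinset]; exact Iff.rfl
  -- Step A : shifted slices
  have hstepA : ∀ S : Finset (Fin d),
      ((B.filter (fun x => x - mcv m (indC S) ∈ omegaH d m H)).card : ℤ)
        = ({x | x ∈ omegaH d m H ∧ degZ x = n - (S.card : ℤ) * m}.ncard : ℤ) := by
    intro S
    have hdegchi : degZ (mcv m (indC S)) = (S.card : ℤ) * m := by
      rw [degZ_mcv]
      have hsb : ∑ i, ((indC S i : ℤ)) = (S.card : ℤ) := by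
        simp [indC, Finset.sum_ite_mem]
      rw [hsb]; ring
    have hkey : (B.filter (fun x => x - mcv m (indC S) ∈ omegaH d m H)).card
        = (hfin (n - (S.card : ℤ) * m)).toFinset.card := by
      refine Finset.card_bij' (fun x _ => x - mcv m (indC S)) (fun y _ => y + mcv m (indC S))
        ?_ ?_ ?_ ?_
      · intro x hx
        obtain ⟨hxf, hxo⟩ := Finset.mem_filter.1 hx
        obtain ⟨-, hxdeg⟩ := (hBmem x).1 hxf
        rw [Set.Finite.mem_toFinset]
        exact ⟨hxo, by rw [degZ_sub, hdegchi, hxdeg]⟩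
      · intro y hy
        rw [Set.Finite.mem_toFinset] at hy
        obtain ⟨hyo, hydeg⟩ := hy
        have hyo' := hyo
        rw [mem_omega_iff hm horth hCM A hA] at hyo'
        obtain ⟨a, ha, c, hye⟩ := hyo'
        refine Finset.mem_filter.2 ⟨(hBmem _).2 ⟨?_, ?_⟩, ?_⟩
        · rw [mem_omega_iff hm horth hCM A hA]
          refine ⟨a, ha, c + indC S, ?_⟩
          show y + mcv m (indC S) = _
          rw [hye, mcv_add]; ring
        · show degZ (y + mcv m (indC S)) = n
          rw [degZ_add, hydeg, hdegchi]; ring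
        · show y + mcv m (indC S) - mcv m (indC S) ∈ omegaH d m H
          simpa using hyo
      · intro x _; simp
      · intro y _; simp
    rw [Set.ncard_eq_toFinset_card _ (hfin (n - (S.card : ℤ) * m))]
    exact_mod_cast congrArg (fun k : ℕ => (k : ℤ)) hkey
  -- Step B : binomial sum = powerset sum
  have hpow : ∑ j ∈ Finset.range (d + 1), (-1 : ℤ) ^ j * (d.choose j : ℤ) *
        ({x | x ∈ omegaH d m H ∧ degZ x = n - (j : ℤ) * m}.ncard : ℤ)
      = ∑ S ∈ (Finset.univ : Finset (Fin d)).powerset, (-1 : ℤ) ^ S.card *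
          ((B.filter (fun x => x - mcv m (indC S) ∈ omegaH d m H)).card : ℤ) := by
    rw [Finset.sum_powerset, Finset.card_univ, Fintype.card_fin]
    refine Finset.sum_congr rfl (fun j hj => ?_)
    have hcongr : ∀ S ∈ Finset.powersetCard j (Finset.univ : Finset (Fin d)),
        (-1 : ℤ) ^ S.card *
            ((B.filter (fun x => x - mcv m (indC S) ∈ omegaH d m H)).card : ℤ)
          = (-1 : ℤ) ^ j * ({x | x ∈ omegaH d m H ∧ degZ x = n - (j : ℤ) * m}.ncard : ℤ) := by
      intro S hS
      have hSc : S.card = j := (Finset.mem_powersetCard.1 hS).2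
      rw [hstepA S, hSc]
    rw [Finset.sum_congr rfl hcongr, Finset.sum_const, Finset.card_powersetCard,
      Finset.card_univ, Fintype.card_fin, nsmul_eq_mul]
    push_cast
    ring
  -- Step C : inclusion-exclusion inside the powerset sum
  have hQsum : ∀ x ∈ B, (∑ S ∈ (Finset.univ : Finset (Fin d)).powerset,
        (-1 : ℤ) ^ S.card * (if x - mcv m (indC S) ∈ omegaH d m H then (1 : ℤ) else 0))
      = (if ∃ a ∈ apery d m H, x = onesV d m - a then (1 : ℤ) else 0) := by
    intro x hx
    obtain ⟨hxo, hxdeg⟩ := (hBmem x).1 hx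
    rw [mem_omega_iff hm horth hCM A hA] at hxo
    obtain ⟨a, ha, c, rfl⟩ := hxo
    set g : Fin d → ℤ := fun i => -(if 1 ≤ c i then (1 : ℤ) else 0) with hg
    have hterm : ∀ S ∈ (Finset.univ : Finset (Fin d)).powerset,
        (-1 : ℤ) ^ S.card *
            (if (onesV d m - a + mcv m c) - mcv m (indC S) ∈ omegaH d m H then (1 : ℤ) else 0)
          = ∏ i ∈ S, g i := by
      intro S _
      by_cases hS : ∀ i ∈ S, 1 ≤ c i
      · rw [if_pos ((shift_mem_iff hm horth hCM A hA ha S).2 hS), mul_one]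
        have hgi : ∀ i ∈ S, g i = -1 := fun i hi => by simp [hg, hS i hi]
        rw [Finset.prod_congr rfl hgi, Finset.prod_const]
      · rw [if_neg (fun h => hS ((shift_mem_iff hm horth hCM A hA ha S).1 h)), mul_zero]
        push_neg at hS
        obtain ⟨i, hiS, hci⟩ := hS
        rw [eq_comm]
        refine Finset.prod_eq_zero hiS ?_
        have : ¬ (1 ≤ c i) := by omega
        simp [hg, this]
    rw [Finset.sum_congr rfl hterm]
    have hpa := Finset.prod_add g (fun _ => (1 : ℤ)) Finset.univ
    simp only [Finset.prod_const_one, mul_one] at hpa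
    rw [← hpa]
    by_cases hc0 : c = 0
    · subst hc0
      rw [if_pos ⟨a, ha, by rw [mcv_zero, add_zero]⟩]
      refine Finset.prod_eq_one (fun i _ => ?_)
      simp [hg]
    · have hex : ∃ i, c i ≠ 0 := by
        by_contra hcon
        push_neg at hcon
        exact hc0 (funext hcon)
      obtain ⟨i, hi⟩ := hex
      rw [if_neg ?_]
      · refine Finset.prod_eq_zero (Finset.mem_univ i) ?_
        have : 1 ≤ c i := by omega
        simp [hg, this]
      · rintro ⟨b, hb, heq⟩
        have heq' : onesV d m - a + mcv m c = onesV d m - b + mcv m 0 := by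
          rw [mcv_zero, add_zero]; exact heq
        obtain ⟨-, hcz⟩ := omega_unique hm hCM ha hb heq'
        exact hi (by rw [hcz]; rfl)
  -- Step D : final bijection with the Apery set
  have hD : (B.filter (fun x => ∃ a ∈ apery d m H, x = onesV d m - a)).card
      = (A.filter (fun h => (d : ℤ) * (m : ℤ) - degZ h = n)).card := by
    refine Finset.card_bij' (fun x _ => onesV d m - x) (fun a _ => onesV d m - a) ?_ ?_ ?_ ?_
    · intro x hx
      obtain ⟨hxB, b, hb, hxe⟩ := Finset.mem_filter.1 hx
      obtain ⟨-, hxdeg⟩ := (hBmem x).1 hxB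
      refine Finset.mem_filter.2 ⟨?_, ?_⟩
      · show onesV d m - x ∈ A
        rw [hxe, sub_sub_cancel]
        exact (hmemA b).2 hb
      · show (d : ℤ) * (m : ℤ) - degZ (onesV d m - x) = n
        rw [degZ_sub, degZ_onesV, hxdeg]
        ring
    · intro a haf
      obtain ⟨haA, hadeg⟩ := Finset.mem_filter.1 haf
      have haAp : a ∈ apery d m H := (hmemA a).1 haA
      refine Finset.mem_filter.2 ⟨(hBmem _).2 ⟨?_, ?_⟩, ⟨a, haAp, rfl⟩⟩
      · rw [mem_omega_iff hm horth hCM A hA]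
        exact ⟨a, haAp, 0, by rw [mcv_zero, add_zero]⟩
      · rw [degZ_sub, degZ_onesV]
        linarith [hadeg]
    · intro x _
      show onesV d m - (onesV d m - x) = x
      rw [sub_sub_cancel]
    · intro a _
      show onesV d m - (onesV d m - a) = a
      rw [sub_sub_cancel]
  -- assemble
  calc
    ∑ j ∈ Finset.range (d + 1), (-1 : ℤ) ^ j * (d.choose j : ℤ) *
        ({x | x ∈ omegaH d m H ∧ degZ x = n - (j : ℤ) * m}.ncard : ℤ)
      = ∑ S ∈ (Finset.univ : Finset (Fin d)).powerset, (-1 : ℤ) ^ S.card *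
          ((B.filter (fun x => x - mcv m (indC S) ∈ omegaH d m H)).card : ℤ) := hpow
    _ = ∑ S ∈ (Finset.univ : Finset (Fin d)).powerset, ∑ x ∈ B,
          (-1 : ℤ) ^ S.card * (if x - mcv m (indC S) ∈ omegaH d m H then (1 : ℤ) else 0) := by
        refine Finset.sum_congr rfl (fun S _ => ?_)
        rw [Finset.card_filter, Nat.cast_sum, Finset.mul_sum]
        simp only [Nat.cast_ite, Nat.cast_one, Nat.cast_zero]
    _ = ∑ x ∈ B, ∑ S ∈ (Finset.univ : Finset (Fin d)).powerset,
          (-1 : ℤ) ^ S.card * (if x - mcv m (indC S) ∈ omegaH d m H then (1 : ℤ) else 0) :=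
        Finset.sum_comm
    _ = ∑ x ∈ B, (if ∃ a ∈ apery d m H, x = onesV d m - a then (1 : ℤ) else 0) :=
        Finset.sum_congr rfl hQsum
    _ = ((B.filter (fun x => ∃ a ∈ apery d m H, x = onesV d m - a)).card : ℤ) := by
        rw [Finset.card_filter, Nat.cast_sum]
        simp only [Nat.cast_ite, Nat.cast_one, Nat.cast_zero]
    _ = ((A.filter (fun h => (d : ℤ) * (m : ℤ) - degZ h = n)).card : ℤ) := by
        exact congrArg (fun k : ℕ => (k : ℤ)) hD

end AGpaper
end

section
/- Let (H,E) be an orthogonal semigroup of order m satisfying the CM condition, let w ∈ Soc(H,E) and h ∈ Ap(H,E). Then c_{w,h} = 0 if and only if h ≤_H w, i.e., if and only if w − h ∈ H. -/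
open scoped Classical

namespace AGpaper

/-- Membership in `ℕE = ℕ(m e₁) + ⋯ + ℕ(m e_d)`. -/
def inNE (d m : ℕ) (x : Fin d → ℤ) : Prop := ∀ i : Fin d, 0 ≤ x i ∧ (m : ℤ) ∣ x i

lemma inNE_mem {d m : ℕ} (hm : 1 ≤ m) (H : AddSubmonoid (Fin d → ℤ))
    (hE : ∀ i : Fin d, Pi.single i (m : ℤ) ∈ H)
    (x : Fin d → ℤ) (hx : inNE d m x) : x ∈ H := by
  have hx' : x = ∑ i, Pi.single i (x i) := by
    ext j
    simp [Finset.sum_apply, Pi.single_apply]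
  rw [hx']
  apply AddSubmonoid.sum_mem
  intro i _
  obtain ⟨hnn, k, hk⟩ := hx i
  have hm0 : (0 : ℤ) < (m : ℤ) := by exact_mod_cast hm
  have hk0 : 0 ≤ k := by nlinarith
  have hsingle : Pi.single i (x i) = k.toNat • (Pi.single i (m : ℤ) : Fin d → ℤ) := by
    ext j
    simp only [Pi.smul_apply, Pi.single_apply]
    split_ifs
    · rw [hk, nsmul_eq_mul, Int.toNat_of_nonneg hk0, mul_comm]
    · simp
  rw [hsingle]
  exact AddSubmonoid.nsmul_mem H (hE i) _

/-- For `w ∈ Soc(H,E)` and `h ∈ Ap(H,E)`, the invariant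
`c_{w,h} = deg(u)/m` (where `(h',u)` is the unique pair with `h' ∈ Ap(H,E)`, `u ∈ ℕE`,
`h + h' = w + u`) vanishes if and only if `h ≤_H w`, i.e. `w - h ∈ H`. -/
theorem c_eq_zero_iff_le {d m : ℕ} (hd : 1 ≤ d) (hm : 1 ≤ m)
    (H : AddSubmonoid (Fin d → ℤ)) (horth : IsOrthogonal d m H)
    (hCM : CMcond d m H)
    (w : Fin d → ℤ) (hw : w ∈ soc d m H)
    (h : Fin d → ℤ) (hh : h ∈ apery d m H)
    (h' u : Fin d → ℤ) (hh' : h' ∈ apery d m H) (hu : inNE d m u)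
    (heq : h + h' = w + u) (c : ℕ) (hc : degZ u = (m : ℤ) * (c : ℤ)) :
    c = 0 ↔ w - h ∈ H := by
  have hm0 : (0 : ℤ) < (m : ℤ) := by exact_mod_cast hm
  obtain ⟨-, -, hE, -, -⟩ := horth
  constructor
  · intro hc0
    have hdeg : degZ u = 0 := by rw [hc, hc0]; simp
    have hu0 : u = 0 := by
      funext i
      have := (Finset.sum_eq_zero_iff_of_nonneg
        (fun j (_ : j ∈ Finset.univ) => (hu j).1)).mp hdeg
      exact this i (Finset.mem_univ i)
    rw [hu0, add_zero] at heq
    have : w - h = h' := by rw [← heq]; abel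
    rw [this]
    exact hh'.1
  · intro hwh
    have hu0 : u = 0 := by
      by_contra hne
      obtain ⟨i, hi⟩ : ∃ i, u i ≠ 0 := by
        by_contra hall
        push_neg at hall
        exact hne (funext hall)
      have hipos : 0 < u i := lt_of_le_of_ne (hu i).1 (Ne.symm hi)
      have hmi : (m : ℤ) ≤ u i := Int.le_of_dvd hipos (hu i).2
      have hsub : inNE d m (u - Pi.single i (m : ℤ)) := by
        intro j
        simp only [Pi.sub_apply, Pi.single_apply]
        split_ifs with hji
        · subst hji
          exact ⟨by linarith, dvd_sub (hu j).2 dvd_rfl⟩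
        · simpa using hu j
      have hmem : h' - Pi.single i (m : ℤ) ∈ H := by
        have hrw : h' - Pi.single i (m : ℤ)
            = (w - h) + (u - Pi.single i (m : ℤ)) := by
          have h'' : h' = w + u - h := by rw [← heq]; abel
          rw [h'']; abel
        rw [hrw]
        exact H.add_mem hwh (inNE_mem hm H hE _ hsub)
      exact hh'.2 i hmem
    rw [hu0] at hc
    simp only [degZ, Pi.zero_apply, Finset.sum_const_zero] at hc
    have : (c : ℤ) = 0 := by
      rcases mul_eq_zero.mp hc.symm with h1 | h1
      · exact absurd h1 (ne_of_gt hm0)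
      · exact h1
    exact_mod_cast this

end AGpaper
end

section
/- Let (H,E) be an orthogonal semigroup of order m satisfying the CM condition and let w ∈ Soc(H,E). Then Σ_{h ∈ Ap(H,E), w−h ∉ H} c_{w,h} ≥ type H − 1, and equality holds if and only if {h ∈ Ap(H,E) : w − h ∉ H} = Soc(H,E)\{w} and c_{w,h} = 1 for every h ∈ Soc(H,E)\{w}. (By the paper's multiplicity computation, the left-hand sum equals the multiplicity e(𝔟; K_R/t^vR) for v = m e_1 + ⋯ + m e_d − w, so this is the lower bound e(𝔟; K_R/t^vR) ≥ type H − 1 together with the characterization of equality.) -/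
open scoped Classical

namespace AGpaper

/-- For `w ∈ Soc(H,E)`, the sum `Σ_{h ∈ Ap(H,E), w-h ∉ H} c_{w,h}` is at
least `type H - 1`, with equality iff `{h ∈ Ap(H,E) : w - h ∉ H} = Soc(H,E) \ {w}` and
`c_{w,h} = 1` for all `h ∈ Soc(H,E) \ {w}`.  Here `A` and `S` are the (finite) Apéry set
and socle, `type H = |S|`, and `c h = c_{w,h}` is specified by its defining property. -/
theorem mult_lower_bound {d m : ℕ} (hd : 1 ≤ d) (hm : 1 ≤ m)
    (H : AddSubmonoid (Fin d → ℤ)) (horth : IsOrthogonal d m H)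
    (hCM : CMcond d m H)
    (A S : Finset (Fin d → ℤ)) (hA : (A : Set (Fin d → ℤ)) = apery d m H)
    (hS : (S : Set (Fin d → ℤ)) = soc d m H)
    (w : Fin d → ℤ) (hw : w ∈ soc d m H)
    (c : (Fin d → ℤ) → ℕ)
    (hc : ∀ h ∈ apery d m H, ∃ h' ∈ apery d m H, ∃ u : Fin d → ℤ,
      inNE d m u ∧ h + h' = w + u ∧ degZ u = (m : ℤ) * (c h : ℤ)) :
    (S.card - 1 ≤ ∑ h ∈ A.filter (fun h => w - h ∉ H), c h) ∧
    ((∑ h ∈ A.filter (fun h => w - h ∉ H), c h) = S.card - 1 ↔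
      (A.filter (fun h => w - h ∉ H) = S.erase w ∧ ∀ h ∈ S.erase w, c h = 1)) := by
  have hmpos : (0 : ℤ) < (m : ℤ) := by exact_mod_cast hm
  set F := A.filter (fun h => w - h ∉ H) with hF
  -- w ∈ S
  have hwS : w ∈ S := by
    have : w ∈ (S : Set (Fin d → ℤ)) := by rw [hS]; exact hw
    exact_mod_cast this
  -- every element of F has c ≥ 1
  have hone : ∀ h ∈ F, 1 ≤ c h := by
    intro h hh
    rw [hF, Finset.mem_filter] at hh
    obtain ⟨hhA, hwh⟩ := hh
    have hhap : h ∈ apery d m H := by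
      have : h ∈ (A : Set (Fin d → ℤ)) := hhA
      rwa [hA] at this
    obtain ⟨h', hh', u, hu, heq, hdeg⟩ := hc h hhap
    by_contra hlt
    have hc0 : c h = 0 := by omega
    have hdeg0 : degZ u = 0 := by rw [hdeg, hc0]; simp
    have hu0 : u = 0 := by
      funext i
      have hnn : ∀ j ∈ (Finset.univ : Finset (Fin d)), 0 ≤ u j := fun j _ => (hu j).1
      have := (Finset.sum_eq_zero_iff_of_nonneg hnn).1 hdeg0 i (Finset.mem_univ i)
      simpa using this
    rw [hu0, add_zero] at heq
    have hwheq : w - h = h' := (eq_sub_of_add_eq' heq).symm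
    exact hwh (hwheq ▸ hh'.1)
  -- S.erase w ⊆ F
  have hsub : S.erase w ⊆ F := by
    intro s hs
    obtain ⟨hsne, hsS⟩ := Finset.mem_erase.1 hs
    have hssoc : s ∈ soc d m H := by
      have : s ∈ (S : Set (Fin d → ℤ)) := hsS
      rwa [hS] at this
    have hsap : s ∈ apery d m H := hssoc.1
    have hsA : s ∈ A := by
      have : s ∈ (A : Set (Fin d → ℤ)) := by rw [hA]; exact hsap
      exact_mod_cast this
    rw [hF, Finset.mem_filter]
    refine ⟨hsA, fun hws => hsne ?_⟩
    exact hssoc.2 w hw.1 hws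
  have hcard : (S.erase w).card = S.card - 1 := Finset.card_erase_of_mem hwS
  have hlow : S.card - 1 ≤ ∑ h ∈ S.erase w, c h := by
    calc S.card - 1 = ∑ _h ∈ S.erase w, 1 := by rw [Finset.sum_const, smul_eq_mul, mul_one, hcard]
    _ ≤ ∑ h ∈ S.erase w, c h := Finset.sum_le_sum (fun i hi => hone i (hsub hi))
  have hmono : ∑ h ∈ S.erase w, c h ≤ ∑ h ∈ F, c h :=
    Finset.sum_le_sum_of_subset hsub
  refine ⟨le_trans hlow hmono, ?_, ?_⟩
  · -- forward direction
    intro heq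
    have hsplit : ∑ h ∈ F \ S.erase w, c h + ∑ h ∈ S.erase w, c h = ∑ h ∈ F, c h :=
      Finset.sum_sdiff hsub
    have hdiff0 : ∑ h ∈ F \ S.erase w, c h = 0 := by omega
    have hFsub : F ⊆ S.erase w := by
      intro h hh
      by_contra hne
      have hmem : h ∈ F \ S.erase w := Finset.mem_sdiff.2 ⟨hh, hne⟩
      have := (Finset.sum_eq_zero_iff).1 hdiff0 h hmem
      have := hone h hh
      omega
    have hFeq : F = S.erase w := Finset.Subset.antisymm hFsub hsub
    refine ⟨hFeq, ?_⟩
    have hsumerase : ∑ h ∈ S.erase w, c h = S.card - 1 := by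
      rw [← hFeq]; exact heq
    have : ∑ _h ∈ S.erase w, 1 = ∑ h ∈ S.erase w, c h := by
      rw [hsumerase, Finset.sum_const, smul_eq_mul, mul_one, hcard]
    have := (Finset.sum_eq_sum_iff_of_le (fun i hi => hone i (hsub hi))).1 this
    intro h hh
    exact (this h hh).symm
  · -- backward direction
    rintro ⟨hFeq, hc1⟩
    rw [hFeq]
    calc ∑ h ∈ S.erase w, c h = ∑ _h ∈ S.erase w, 1 :=
          Finset.sum_congr rfl (fun h hh => hc1 h hh)
    _ = S.card - 1 := by rw [Finset.sum_const, smul_eq_mul, mul_one, hcard]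

end AGpaper
end

section
/- Let (H,E) be an orthogonal semigroup of order m, k a field, R = k[H], and let w ∈ H, w ≠ 0. Assume that every nonzero h ∈ H with supp(w) ⊄ supp(h) satisfies deg h ≥ m. Then for every h ∈ H with h ≠ 0 there exists n > 0 such that t^{(n+1)h} ∈ 𝔟·𝔪^n + t^w·R. -/
open scoped Classical

namespace AGpaper

/-- The support of an integer vector. -/
def suppZ {d : ℕ} (x : Fin d → ℤ) : Set (Fin d) := {i | x i ≠ 0}

/-- The semigroup ring `R = k[H]` as a `k`-submodule of the group algebra `k[ℤ^d]`. -/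
noncomputable def Rmod (k : Type*) [Field k] {d : ℕ} (H : AddSubmonoid (Fin d → ℤ)) :
    Submodule k (AddMonoidAlgebra k (Fin d → ℤ)) :=
  Submodule.span k {f | ∃ h ∈ H, f = AddMonoidAlgebra.single h (1 : k)}

/-- The graded maximal ideal `𝔪` of `R = k[H]`, as a `k`-submodule of `k[ℤ^d]`:
the span of the monomials `t^h`, `0 ≠ h ∈ H`. -/
noncomputable def mIdeal (k : Type*) [Field k] {d : ℕ} (H : AddSubmonoid (Fin d → ℤ)) :
    Submodule k (AddMonoidAlgebra k (Fin d → ℤ)) :=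
  Submodule.span k {f | ∃ h ∈ H, h ≠ 0 ∧ f = AddMonoidAlgebra.single h (1 : k)}

/-- The ideal `𝔟` of `R = k[H]` generated by the differences `t^{m eᵢ} - t^{m eⱼ}`,
as a `k`-submodule of `k[ℤ^d]`. -/
noncomputable def bIdeal (k : Type*) [Field k] (d m : ℕ) (H : AddSubmonoid (Fin d → ℤ)) :
    Submodule k (AddMonoidAlgebra k (Fin d → ℤ)) :=
  Rmod k H * Submodule.span k {f | ∃ i j : Fin d,
    f = AddMonoidAlgebra.single (Pi.single i (m : ℤ)) (1 : k) -
        AddMonoidAlgebra.single (Pi.single j (m : ℤ)) (1 : k)}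

/-- The principal module `t^w·R`, as a `k`-submodule of `k[ℤ^d]`. -/
noncomputable def twR (k : Type*) [Field k] {d : ℕ} (H : AddSubmonoid (Fin d → ℤ))
    (w : Fin d → ℤ) : Submodule k (AddMonoidAlgebra k (Fin d → ℤ)) :=
  Submodule.span k {f | ∃ h ∈ H, f = AddMonoidAlgebra.single (w + h) (1 : k)}

open AddMonoidAlgebra

/-- ℤ-vector with coordinates `m * c`. -/
def Mv (m : ℕ) {d : ℕ} (c : Fin d → ℕ) : Fin d → ℤ := fun l => (m : ℤ) * c l

lemma Mv_add (m : ℕ) {d : ℕ} (c c' : Fin d → ℕ) : Mv m (c + c') = Mv m c + Mv m c' := by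
  funext l; simp [Mv]; ring

lemma Mv_mem {d m : ℕ} {H : AddSubmonoid (Fin d → ℤ)}
    (hgen : ∀ i : Fin d, Pi.single i (m : ℤ) ∈ H) (c : Fin d → ℕ) :
    Mv m c ∈ H := by
  have h : Mv m c = ∑ l, (c l) • Pi.single l (m : ℤ) := by
    funext i
    simp [Mv, Finset.sum_apply, Pi.single_apply, mul_comm]
  rw [h]
  exact AddSubmonoid.sum_mem H fun l _ => AddSubmonoid.nsmul_mem H (hgen l) _

lemma split_sum {d : ℕ} (n : ℕ) :
    ∀ c : Fin d → ℕ, n ≤ ∑ l, c l →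
      ∃ c' c'' : Fin d → ℕ, c = c' + c'' ∧ ∑ l, c' l = n := by
  induction n with
  | zero => intro c _; exact ⟨0, c, (zero_add c).symm, by simp⟩
  | succ n ih =>
    intro c hc
    have hj : ∃ j, 0 < c j := by
      by_contra hno
      push_neg at hno
      have : ∑ l, c l = 0 := Finset.sum_eq_zero fun l _ => Nat.le_zero.mp (hno l)
      omega
    obtain ⟨j, hj⟩ := hj
    set c₀ : Fin d → ℕ := Function.update c j (c j - 1) with hc₀
    have hsum0 : ∑ l, c₀ l = (∑ l, c l) - 1 := by
      rw [hc₀, Finset.sum_update_of_mem (Finset.mem_univ j)]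
      have h2 : ∑ l, c l = (∑ x ∈ Finset.univ \ {j}, c x) + c j :=
        Finset.sum_eq_sum_sdiff_singleton_add (Finset.mem_univ j) c
      omega
    have h1 : n ≤ ∑ l, c₀ l := by omega
    obtain ⟨c', c'', heq, hsum⟩ := ih c₀ h1
    refine ⟨c' + Pi.single j 1, c'', ?_, ?_⟩
    · funext l
      have h3 := congrFun heq l
      rcases eq_or_ne l j with rfl | hne
      · simp only [hc₀, Function.update_self, Pi.add_apply] at h3
        simp [Pi.single_apply]
        omega
      · simp only [hc₀, Function.update_of_ne hne, Pi.add_apply] at h3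
        simp [Pi.single_apply, hne, h3]
    · simp only [Pi.add_apply, Finset.sum_add_distrib, hsum, Pi.single_apply]
      simp

section
variable {k : Type*} [Field k] {d m : ℕ} {H : AddSubmonoid (Fin d → ℤ)}

lemma mem_Rmod {h : Fin d → ℤ} (hh : h ∈ H) : single h (1 : k) ∈ Rmod k H :=
  Submodule.subset_span ⟨h, hh, rfl⟩

lemma mem_mIdeal {h : Fin d → ℤ} (hh : h ∈ H) (h0 : h ≠ 0) :
    single h (1 : k) ∈ mIdeal k H :=
  Submodule.subset_span ⟨h, hh, h0, rfl⟩

lemma pi_single_ne_zero (hm : 1 ≤ m) (j : Fin d) : (Pi.single j (m : ℤ) : Fin d → ℤ) ≠ 0 := by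
  intro h0
  have := congrFun h0 j
  simp at this
  omega

lemma Mv_split (hm : 1 ≤ m) (hgen : ∀ i : Fin d, Pi.single i (m : ℤ) ∈ H)
    (n : ℕ) : ∀ c : Fin d → ℕ, (∑ l, c l) = n →
    single (Mv m c) (1 : k) ∈ (mIdeal k H) ^ n := by
  induction n with
  | zero =>
    intro c hc
    have hc0 : c = 0 := by
      funext l
      have := Finset.sum_eq_zero_iff.mp hc l (Finset.mem_univ l)
      simpa using this
    have : Mv m c = 0 := by funext l; simp [Mv, hc0]
    rw [this, pow_zero]
    have h1 : (1 : AddMonoidAlgebra k (Fin d → ℤ)) ∈ (1 : Submodule k (AddMonoidAlgebra k (Fin d → ℤ))) :=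
      Submodule.one_le.mp le_rfl
    simpa [AddMonoidAlgebra.one_def] using h1
  | succ n ih =>
    intro c hc
    have hj : ∃ j, 0 < c j := by
      by_contra hno
      push_neg at hno
      have : ∑ l, c l = 0 := Finset.sum_eq_zero fun l _ => Nat.le_zero.mp (hno l)
      omega
    obtain ⟨j, hj⟩ := hj
    set c₀ : Fin d → ℕ := Function.update c j (c j - 1) with hc₀
    have hsum0 : ∑ l, c₀ l = n := by
      rw [hc₀, Finset.sum_update_of_mem (Finset.mem_univ j)]
      have h2 : ∑ l, c l = (∑ x ∈ Finset.univ \ {j}, c x) + c j :=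
        Finset.sum_eq_sum_sdiff_singleton_add (Finset.mem_univ j) c
      omega
    have hMv : Mv m c = Pi.single j (m : ℤ) + Mv m c₀ := by
      funext l
      rcases eq_or_ne l j with rfl | hne
      · simp [Mv, hc₀, Pi.single_apply]
        have : ((c l : ℤ)) = 1 + ((c l - 1 : ℕ) : ℤ) := by omega
        rw [this]; ring
      · simp [Mv, hc₀, Pi.single_apply, hne, Function.update_of_ne hne]
    have key : single (Mv m c) (1 : k)
        = single (Pi.single j (m : ℤ)) (1 : k) * single (Mv m c₀) (1 : k) := by
      rw [AddMonoidAlgebra.single_mul_single, one_mul, hMv]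
    rw [key, pow_succ']
    exact Submodule.mul_mem_mul (mem_mIdeal (hgen j) (pi_single_ne_zero hm j)) (ih c₀ hsum0)

/-- The swap lemma. -/
lemma swap_mem (hm : 1 ≤ m) (hgen : ∀ i : Fin d, Pi.single i (m : ℤ) ∈ H)
    (i j : Fin d) (n : ℕ) (c' c'' : Fin d → ℕ) (hc' : ∑ l, c' l = n) :
    single (Mv m (Pi.single i 1 + c' + c'')) (1 : k)
      - single (Mv m (Pi.single j 1 + c' + c'')) (1 : k)
      ∈ bIdeal k d m H * (mIdeal k H) ^ n := by
  have hdiff : single (Pi.single i (m : ℤ)) (1 : k) - single (Pi.single j (m : ℤ)) (1 : k)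
      ∈ Submodule.span k ({f | ∃ i j : Fin d,
        f = AddMonoidAlgebra.single (Pi.single i (m : ℤ)) (1 : k) -
            AddMonoidAlgebra.single (Pi.single j (m : ℤ)) (1 : k)} :
        Set (AddMonoidAlgebra k (Fin d → ℤ))) :=
    by exact Submodule.subset_span ⟨i, j, rfl⟩
  have h1 : single (Mv m c'') (1 : k) ∈ Rmod k H := mem_Rmod (Mv_mem hgen c'')
  have h2 : single (Mv m c') (1 : k) ∈ (mIdeal k H) ^ n := Mv_split hm hgen n c' hc'
  have hmem := Submodule.mul_mem_mul (Submodule.mul_mem_mul h1 hdiff) h2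
  rw [show Rmod k H * Submodule.span k ({f | ∃ i j : Fin d,
        f = AddMonoidAlgebra.single (Pi.single i (m : ℤ)) (1 : k) -
            AddMonoidAlgebra.single (Pi.single j (m : ℤ)) (1 : k)} :
        Set (AddMonoidAlgebra k (Fin d → ℤ))) = bIdeal k d m H from rfl] at hmem
  have haddr : ∀ a : Fin d, Mv m (Pi.single a 1 + c' + c'') = Mv m c'' + Pi.single a (m : ℤ) + Mv m c' := by
    intro a
    funext l
    rcases eq_or_ne l a with rfl | hne
    · simp [Mv, Pi.single_apply]; push_cast; ring
    · simp [Mv, Pi.single_apply, hne]; push_cast; ring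
  have helt : single (Mv m c'') (1 : k)
        * (single (Pi.single i (m : ℤ)) (1 : k) - single (Pi.single j (m : ℤ)) (1 : k))
        * single (Mv m c') (1 : k)
      = single (Mv m (Pi.single i 1 + c' + c'')) (1 : k)
        - single (Mv m (Pi.single j 1 + c' + c'')) (1 : k) := by
    rw [mul_sub, sub_mul]
    simp only [AddMonoidAlgebra.single_mul_single, one_mul, mul_one]
    rw [haddr i, haddr j]
  rwa [helt] at hmem

/-- The chain lemma: any monomial in `M` of total nat-degree `A ≥ n+1` is congruent
to the canonical one supported at `i0`, modulo `𝔟·𝔪^n`. -/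
lemma chain_mem (hm : 1 ≤ m) (hgen : ∀ i : Fin d, Pi.single i (m : ℤ) ∈ H)
    (i0 : Fin d) (n A : ℕ) (hA : n + 1 ≤ A) :
    ∀ t : ℕ, ∀ c : Fin d → ℕ, (∑ l, c l) = A → A - c i0 = t →
      single (Mv m c) (1 : k) - single (Mv m (Pi.single i0 A)) (1 : k)
        ∈ bIdeal k d m H * (mIdeal k H) ^ n := by
  intro t
  induction t with
  | zero =>
    intro c hsum ht
    have hci0 : c i0 ≤ A := by
      have := Finset.single_le_sum (f := c) (fun l _ => Nat.zero_le _) (Finset.mem_univ i0)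
      omega
    have hci0' : c i0 = A := by omega
    have hc : c = Pi.single i0 A := by
      funext l
      rcases eq_or_ne l i0 with rfl | hne
      · simp [hci0']
      · have h2 : ∑ x, c x = (∑ x ∈ Finset.univ \ {i0}, c x) + c i0 :=
          Finset.sum_eq_sum_sdiff_singleton_add (Finset.mem_univ i0) c
        have h3 : ∑ x ∈ Finset.univ \ {i0}, c x = 0 := by omega
        have h4 : c l = 0 := by
          have := Finset.sum_eq_zero_iff.mp h3 l (by simp [hne])
          exact this
        simp [Pi.single_apply, hne, h4]
    rw [hc, sub_self]
    exact zero_mem _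
  | succ t ih =>
    intro c hsum ht
    have hci0 : c i0 ≤ A := by
      have := Finset.single_le_sum (f := c) (fun l _ => Nat.zero_le _) (Finset.mem_univ i0)
      omega
    -- there is j ≠ i0 with c j ≥ 1
    have h2 : ∑ x, c x = (∑ x ∈ Finset.univ \ {i0}, c x) + c i0 :=
      Finset.sum_eq_sum_sdiff_singleton_add (Finset.mem_univ i0) c
    have hrest : 0 < ∑ x ∈ Finset.univ \ {i0}, c x := by omega
    have hj : ∃ j, j ≠ i0 ∧ 0 < c j := by
      by_contra hno
      push_neg at hno
      have : ∑ x ∈ Finset.univ \ {i0}, c x = 0 := by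
        apply Finset.sum_eq_zero
        intro x hx
        simp only [Finset.mem_sdiff, Finset.mem_univ, Finset.mem_singleton, true_and] at hx
        exact Nat.le_zero.mp (hno x hx)
      omega
    obtain ⟨j, hjne, hj⟩ := hj
    set c₀ : Fin d → ℕ := Function.update c j (c j - 1) with hc₀
    have hsum0 : ∑ l, c₀ l = A - 1 := by
      rw [hc₀, Finset.sum_update_of_mem (Finset.mem_univ j)]
      have h2' : ∑ l, c l = (∑ x ∈ Finset.univ \ {j}, c x) + c j :=
        Finset.sum_eq_sum_sdiff_singleton_add (Finset.mem_univ j) c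
      omega
    obtain ⟨c', c'', heq, hsumc'⟩ := split_sum n c₀ (by omega)
    have hcdec : c = Pi.single j 1 + c' + c'' := by
      funext l
      have h3 := congrFun heq l
      rcases eq_or_ne l j with rfl | hne
      · simp only [hc₀, Function.update_self, Pi.add_apply] at h3
        simp [Pi.single_apply]
        omega
      · simp only [hc₀, Function.update_of_ne hne, Pi.add_apply] at h3
        simp [Pi.single_apply, hne, h3]
    set c₂ : Fin d → ℕ := Pi.single i0 1 + c' + c'' with hc₂
    have hswap := swap_mem (k := k) hm hgen j i0 n c' c'' hsumc'
    rw [← hcdec] at hswap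
    have hsum2 : ∑ l, c₂ l = A := by
      have e1 : ∑ l, (Pi.single j 1 + c' + c'' : Fin d → ℕ) l = A := by rw [← hcdec]; exact hsum
      simp only [hc₂, Pi.add_apply, Finset.sum_add_distrib] at e1 ⊢
      have hs : ∀ a : Fin d, ∑ l, (Pi.single a 1 : Fin d → ℕ) l = 1 := by
        intro a; simp [Pi.single_apply]
      rw [hs j] at e1
      rw [hs i0]
      omega
    have hc₂i0 : c₂ i0 = c i0 + 1 := by
      have h3 := congrFun hcdec i0
      simp only [hc₂, Pi.add_apply, Pi.single_eq_same]
      rw [Pi.add_apply, Pi.add_apply, Pi.single_eq_of_ne (Ne.symm hjne)] at h3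
      omega
    have hih := ih c₂ hsum2 (by omega)
    have := add_mem hswap hih
    rwa [sub_add_sub_cancel] at this

end

/-- (The Claim in Proposition 3.9.) Let `0 ≠ w ∈ H` and assume every
nonzero `h ∈ H` with `supp w ⊄ supp h` has `deg h ≥ m`.  Then for every nonzero `h ∈ H`
there is `n > 0` with `t^{(n+1)h} ∈ 𝔟·𝔪^n + t^w·R`. -/
theorem claim_power_in_reduction (k : Type*) [Field k] {d m : ℕ}
    (hd : 1 ≤ d) (hm : 1 ≤ m)
    (H : AddSubmonoid (Fin d → ℤ)) (horth : IsOrthogonal d m H)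
    (w : Fin d → ℤ) (hw : w ∈ H) (hw0 : w ≠ 0)
    (hslim : ∀ h ∈ H, h ≠ 0 → ¬ suppZ w ⊆ suppZ h → (m : ℤ) ≤ degZ h) :
    ∀ h ∈ H, h ≠ 0 → ∃ n : ℕ, 0 < n ∧
      AddMonoidAlgebra.single ((n + 1) • h) (1 : k) ∈
        bIdeal k d m H * mIdeal k H ^ n + twR k H w := by
  obtain ⟨-, hpos, hgen, ⟨n0, hn0, hdvd⟩, -⟩ := horth
  obtain ⟨n0', rfl⟩ : ∃ n0', n0 = n0' + 1 := ⟨n0 - 1, by omega⟩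
  have hmZ : (0 : ℤ) < (m : ℤ) := by exact_mod_cast hm
  have hcoord : ∀ x ∈ H, ∀ l,
      (m : ℤ) * ((((n0' + 1 : ℕ) : ℤ) * x l / m).toNat : ℤ) = ((n0' : ℤ) + 1) * x l := by
    intro x hx l
    have hdv : (m : ℤ) ∣ ((n0' + 1 : ℕ) : ℤ) * x l := hdvd x hx l
    have hnn : 0 ≤ ((n0' + 1 : ℕ) : ℤ) * x l := mul_nonneg (by positivity) (hpos x hx l)
    have hq : 0 ≤ ((n0' + 1 : ℕ) : ℤ) * x l / m := Int.ediv_nonneg hnn (le_of_lt hmZ)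
    rw [Int.toNat_of_nonneg hq, Int.mul_ediv_cancel' hdv]
    push_cast
    ring
  intro h hh hh0
  obtain ⟨a₀, ha₀p⟩ : ∃ a₀ : Fin d → ℕ, ∀ l, (m : ℤ) * (a₀ l : ℤ) = ((n0' : ℤ) + 1) * h l :=
    ⟨fun l => (((n0' + 1 : ℕ) : ℤ) * h l / m).toNat, fun l => hcoord h hh l⟩
  obtain ⟨b₀, hb₀p⟩ : ∃ b₀ : Fin d → ℕ, ∀ l, (m : ℤ) * (b₀ l : ℤ) = ((n0' : ℤ) + 1) * w l :=
    ⟨fun l => (((n0' + 1 : ℕ) : ℤ) * w l / m).toNat, fun l => hcoord w hw l⟩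
  by_cases hsupp : suppZ w ⊆ suppZ h
  · -- Case 1: direct membership in t^w R
    obtain ⟨K, hKval, hK2⟩ : ∃ K : ℕ, K = (∑ l, (w l).toNat) + 2 ∧ 2 ≤ K :=
      ⟨_, rfl, by omega⟩
    have hKn0 : 2 ≤ K * (n0' + 1) := by
      have h1 : K ≤ K * (n0' + 1) := Nat.le_mul_of_pos_right K (Nat.succ_pos n0')
      omega
    refine ⟨K * (n0' + 1) - 1, by omega, ?_⟩
    have hn1 : (K * (n0' + 1) - 1) + 1 = K * (n0' + 1) := by omega
    have hb : ∀ l, b₀ l ≤ K * a₀ l := by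
      intro l
      rcases eq_or_ne (w l) 0 with hwl | hwl
      · have h1 : (m : ℤ) * (b₀ l : ℤ) = 0 := by rw [hb₀p l, hwl]; ring
        have h2 : (b₀ l : ℤ) = 0 := by
          rcases mul_eq_zero.mp h1 with h' | h'
          · omega
          · exact h'
        omega
      · have hhl : 1 ≤ h l := by
          have h1 := hsupp (show l ∈ suppZ w from hwl)
          have h2 := hpos h hh l
          simp only [suppZ, Set.mem_setOf_eq] at h1
          omega
        have hwK : w l ≤ (K : ℤ) := by
          have h1 : (w l).toNat ≤ ∑ l', (w l').toNat :=
            Finset.single_le_sum (f := fun l' => (w l').toNat) (fun _ _ => Nat.zero_le _)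
              (Finset.mem_univ l)
          have h2 := hpos w hw l
          omega
        have key : (m : ℤ) * (b₀ l : ℤ) ≤ (m : ℤ) * ((K * a₀ l : ℕ) : ℤ) := by
          rw [hb₀p l]
          push_cast
          calc ((n0' : ℤ) + 1) * w l ≤ ((n0' : ℤ) + 1) * K :=
                mul_le_mul_of_nonneg_left hwK (by positivity)
            _ ≤ (((n0' : ℤ) + 1) * h l) * K :=
                mul_le_mul_of_nonneg_right (le_mul_of_one_le_right (by positivity) hhl)
                  (by positivity)
            _ = ((m : ℤ) * (a₀ l : ℤ)) * K := by rw [ha₀p l]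
            _ = (m : ℤ) * ((K : ℤ) * (a₀ l : ℤ)) := by ring
        have h3 := le_of_mul_le_mul_left key hmZ
        exact_mod_cast h3
    have hMvc1 : ∀ l, Mv m (fun l' => K * a₀ l' - b₀ l') l
        = (K : ℤ) * (((n0' : ℤ) + 1) * h l) - ((n0' : ℤ) + 1) * w l := by
      intro l
      simp only [Mv]
      rw [Nat.cast_sub (hb l)]
      push_cast
      linear_combination (K : ℤ) * ha₀p l - hb₀p l
    set h' : Fin d → ℤ := Mv m (fun l' => K * a₀ l' - b₀ l') + n0' • w with hh'
    have hh'H : h' ∈ H :=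
      H.add_mem (Mv_mem hgen _) (AddSubmonoid.nsmul_mem H hw _)
    have hkey : ((K * (n0' + 1) - 1 : ℕ) + 1) • h = w + h' := by
      funext l
      rw [hn1, Pi.add_apply]
      have hval : h' l = Mv m (fun l' => K * a₀ l' - b₀ l') l + (n0' : ℤ) * w l := by
        rw [hh', Pi.add_apply, Pi.smul_apply, nsmul_eq_mul]
      rw [hval, hMvc1 l, Pi.smul_apply, nsmul_eq_mul]
      push_cast
      ring
    rw [hkey]
    exact Submodule.mem_sup_right (Submodule.subset_span ⟨h', hh'H, rfl⟩)
  · -- Case 2: chain through 𝔟·𝔪^n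
    have hdeg : (m : ℤ) ≤ degZ h := hslim h hh hh0 hsupp
    obtain ⟨B0, hB0⟩ : ∃ B0 : ℕ, B0 = ∑ l, b₀ l := ⟨_, rfl⟩
    obtain ⟨K, hKval⟩ : ∃ K : ℕ, K = B0 + 2 := ⟨_, rfl⟩
    have hKn0 : 2 ≤ K * (n0' + 1) := by
      have h1 : K ≤ K * (n0' + 1) := Nat.le_mul_of_pos_right K (Nat.succ_pos n0')
      omega
    obtain ⟨n, hnval⟩ : ∃ n : ℕ, n = K * (n0' + 1) - 1 := ⟨_, rfl⟩
    have hn1 : n + 1 = K * (n0' + 1) := by omega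
    obtain ⟨a, haval⟩ : ∃ a : Fin d → ℕ, a = fun l => K * a₀ l := ⟨_, rfl⟩
    obtain ⟨A, hAval⟩ : ∃ A : ℕ, A = ∑ l, a l := ⟨_, rfl⟩
    have hsa₀ : n0' + 1 ≤ ∑ l, a₀ l := by
      have e1 : (m : ℤ) * (∑ l, (a₀ l : ℤ)) = ((n0' : ℤ) + 1) * degZ h := by
        rw [Finset.mul_sum, degZ, Finset.mul_sum]
        exact Finset.sum_congr rfl fun l _ => ha₀p l
      have e2 : (m : ℤ) * ((n0' : ℤ) + 1) ≤ (m : ℤ) * (∑ l, (a₀ l : ℤ)) := by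
        rw [e1]
        calc (m : ℤ) * ((n0' : ℤ) + 1) = ((n0' : ℤ) + 1) * m := by ring
          _ ≤ ((n0' : ℤ) + 1) * degZ h := mul_le_mul_of_nonneg_left hdeg (by positivity)
      have h3 := le_of_mul_le_mul_left e2 hmZ
      exact_mod_cast h3
    have hAK : K * (n0' + 1) ≤ A := by
      rw [hAval, haval]
      calc K * (n0' + 1) ≤ K * ∑ l, a₀ l := Nat.mul_le_mul_left K hsa₀
        _ = ∑ l, K * a₀ l := by rw [Finset.mul_sum]
    have hAn : n + 1 ≤ A := by omega
    have hB0A : B0 ≤ A := by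
      have h2 : K ≤ K * (n0' + 1) := Nat.le_mul_of_pos_right K (Nat.succ_pos n0')
      omega
    obtain ⟨i0, hi0⟩ : ∃ i0 : Fin d, i0 = ⟨0, hd⟩ := ⟨_, rfl⟩
    obtain ⟨cy, hcyval⟩ : ∃ cy : Fin d → ℕ, cy = b₀ + Pi.single i0 (A - B0) := ⟨_, rfl⟩
    have hsumy : ∑ l, cy l = A := by
      simp only [hcyval, Pi.add_apply, Finset.sum_add_distrib]
      have h1 : ∑ l, (Pi.single i0 (A - B0) : Fin d → ℕ) l = A - B0 := by
        simp [Pi.single_apply]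
      rw [h1, ← hB0]
      omega
    have hx : (n + 1) • h = Mv m a := by
      funext l
      simp only [Mv, haval]
      rw [Pi.smul_apply, nsmul_eq_mul, hn1]
      push_cast
      linear_combination (-(K : ℤ)) * ha₀p l
    set h' : Fin d → ℤ := n0' • w + (A - B0) • (Pi.single i0 (m : ℤ)) with hh'
    have hh'H : h' ∈ H := H.add_mem (AddSubmonoid.nsmul_mem H hw _)
      (AddSubmonoid.nsmul_mem H (hgen i0) _)
    have hy : Mv m cy = w + h' := by
      funext l
      have hval : h' l = (n0' : ℤ) * w l + ((A - B0 : ℕ) : ℤ) * ((Pi.single i0 (m : ℤ) : Fin d → ℤ) l) := by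
        rw [hh', Pi.add_apply, Pi.smul_apply, Pi.smul_apply, nsmul_eq_mul, nsmul_eq_mul]
      rw [Pi.add_apply, hval]
      simp only [Mv, hcyval, Pi.add_apply]
      by_cases hne : l = i0
      · subst hne
        rw [Pi.single_eq_same, Pi.single_eq_same]
        push_cast
        linear_combination hb₀p l
      · rw [Pi.single_eq_of_ne hne, Pi.single_eq_of_ne hne]
        push_cast
        linear_combination hb₀p l
    have mem1 := chain_mem (k := k) (H := H) hm hgen i0 n A hAn (A - a i0) a hAval.symm rfl
    have mem2 := chain_mem (k := k) (H := H) hm hgen i0 n A hAn (A - cy i0) cy hsumy rfl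
    have hdiff := sub_mem mem1 mem2
    rw [sub_sub_sub_cancel_right] at hdiff
    refine ⟨n, by omega, ?_⟩
    rw [hx]
    have htw : single (Mv m cy) (1 : k) ∈ twR k H w := by
      rw [hy]
      exact Submodule.subset_span ⟨h', hh'H, rfl⟩
    have hfin := add_mem (Submodule.mem_sup_left hdiff) (Submodule.mem_sup_right htw)
    rwa [sub_add_cancel] at hfin

end AGpaper
end
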